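/- arXiv:2112.11896 — 5 statements merged into one kernel-verified Lean document; each statement's English description precedes it below -/
import Mathlib

section
/- Let q be a prime power, let F_q ⊆ F_{q²} be the finite fields with q and q² elements, and let α_1, …, α_{q+1} be the (q+1) distinct (q+1)-st roots of unity in F_{q²}. If k is odd with 1 ≤ k ≤ q, then the code C = {(h(α_1)+h(α_1)^q, …, h(α_{q+1})+h(α_{q+1})^q) : h ∈ F_{q²}[X], deg h ≤ (k−1)/2} is a k-dimensional F_q-linear subspace of F_q^{q+1} with minimum distance q+2−k (i.e. a [q+1,k,q+2−k]_q MDS code), and moreover C is a generalised Reed–Solomon code over F_q. -/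
/-!
Let `σ` be the Frobenius `x ↦ x ^ q` of `𝔽_{q²}/𝔽_q` and `k = 2m + 1`. The coordinates of the code
are the traces `h(α) + σ (h(α))`, and `σ α = α⁻¹` on the `(q+1)`-st roots of unity, so the
coordinate at `α` vanishes iff `α` is a root of `X ^ m (h(X) + h^σ(X⁻¹))`. This polynomial has
degree at most `2m = k - 1` and is nonzero unless `h` is constant. Hence a nonzero word has at most
`k - 1` zeros, and the kernel of `h ↦ word` consists of trace-zero constants, a line over `𝔽_q`,
so the code has dimension at least `2(m + 1) - 1 = k`.

For the GRS structure fix `δ ∉ 𝔽_q`. The Möbius map `x ↦ α_{q+1} (x + δ) / (x + σ δ)` sends `𝔽_q`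
bijectively onto the other `q` roots of unity. Substituting it into `h` and clearing denominators
gives `R` of degree at most `2m`, and `f = R + R^σ` has coefficients in `𝔽_q`. The word of `h` is
then `f` evaluated on `𝔽_q`, scaled by powers of the norms `N(x + δ)`, followed by the top
coefficient `f_{2m} = Tr h(α_{q+1})`. So the code lies in a GRS code of dimension at most `k`, and
the two are equal.
-/

open Polynomial

/-- A generalised Reed–Solomon code of length `q+1` and dimension `k`, with symbols from the
field `F` of `q` elements, viewed inside the `F`-algebra `K` via `algebraMap`:
the set of words `(θ₁ f(a₁), …, θ_q f(a_q), θ_{q+1} f_{k-1})` where `f` ranges over the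
polynomials in `F[X]` of degree at most `k-1`, `a : Fin q → F` is an enumeration of the
elements of `F`, `f_{k-1}` is the coefficient of `X^(k-1)` in `f`, and the `θ i` are fixed
nonzero elements of `F`. -/
def IsGRSCode (q k : ℕ) (F K : Type*) [Field F] [CommRing K] [Algebra F K]
    (Code : Set (Fin (q + 1) → K)) : Prop :=
  ∃ (a : Fin q → F) (θ : Fin (q + 1) → F),
    Function.Bijective a ∧ (∀ i, θ i ≠ 0) ∧
    Code = { w | ∃ f : Polynomial F, f.degree ≤ (k - 1 : ℕ) ∧
      w = fun i => algebraMap F K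
        (θ i * (Fin.snoc (fun j : Fin q => f.eval (a j)) (f.coeff (k - 1)) : Fin (q + 1) → F) i) }

section Reciprocal

variable {K : Type*} [Field K] (σ : K →+* K)

/-- `X ^ m * (h(X) + h^σ(X⁻¹))`, where `h^σ` applies `σ` to the coefficients of `h`. -/
noncomputable def traceNumerator (m : ℕ) (h : K[X]) : K[X] := X ^ m * h + reflect m (h.map σ)

variable {σ} {m : ℕ} {h : K[X]}

lemma natDegree_traceNumerator_le (hh : h.natDegree ≤ m) :
    (traceNumerator σ m h).natDegree ≤ 2 * m := by
  refine natDegree_add_le_of_degree_le ?_ ?_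
  · exact (natDegree_mul_le.trans (by rw [natDegree_X_pow]; omega))
  · exact natDegree_reflect_le.trans (max_le (by omega) ((natDegree_map_le).trans (by omega)))

lemma coeff_traceNumerator_add (hh : h.natDegree ≤ m) {n : ℕ} (hn : 0 < n) :
    (traceNumerator σ m h).coeff (m + n) = h.coeff n := by
  rw [traceNumerator, coeff_add, add_comm m n, coeff_X_pow_mul, coeff_reflect,
    revAt_eq_self_of_lt (by omega), coeff_map,
    coeff_eq_zero_of_natDegree_lt (show h.natDegree < n + m by omega), map_zero, add_zero]

lemma eval_traceNumerator (hh : h.natDegree ≤ m) {β : K} (hβ : β * σ β = 1) :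
    (traceNumerator σ m h).eval β = β ^ m * (h.eval β + σ (h.eval β)) := by
  let _ : Invertible (σ β) := ⟨β, hβ, by rw [mul_comm, hβ]⟩
  have hrefl := eval₂_reflect_mul_pow (RingHom.id K) (σ β) m (h.map σ)
    ((natDegree_map_le).trans hh)
  rw [invOf_eq_left_inv hβ, ← eval, ← eval, eval_map, eval₂_at_apply] at hrefl
  rw [traceNumerator, eval_add, eval_mul, eval_pow, eval_X, mul_add, ← hrefl, mul_comm _ (σ β ^ m),
    ← mul_assoc, ← mul_pow, hβ, one_pow, one_mul]

theorem eq_C_of_trace_eval_eq_zero {ι : Type*} {β : ι → K} (hβ : Function.Injective β)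
    (hcirc : ∀ i, β i * σ (β i) = 1) (hh : h.natDegree ≤ m) (s : Finset ι)
    (hs : ∀ i ∈ s, h.eval (β i) + σ (h.eval (β i)) = 0) (hcard : 2 * m < s.card) :
    h = C (h.coeff 0) := by
  classical
  have hzero : traceNumerator σ m h = 0 := by
    refine eq_zero_of_natDegree_lt_card_of_eval_eq_zero' _ (s.image β) ?_ ?_
    · simp only [Finset.mem_image, forall_exists_index, and_imp]
      rintro _ i hi rfl
      rw [eval_traceNumerator hh (hcirc i), hs i hi, mul_zero]
    · rw [Finset.card_image_of_injective s hβ]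
      exact (natDegree_traceNumerator_le hh).trans_lt hcard
  ext n
  rcases Nat.eq_zero_or_pos n with rfl | hn
  · rw [coeff_C_zero]
  · rw [coeff_C_of_ne_zero hn.ne', ← coeff_traceNumerator_add hh hn, hzero, coeff_zero]

end Reciprocal

section Mobius

variable {K : Type*} [Field K]

/-- `((X + δ) (X + δ')) ^ m * h(γ (X + δ) / (X + δ'))` with the denominators cleared. -/
noncomputable def mobiusNumerator (m : ℕ) (γ δ δ' : K) (h : K[X]) : K[X] :=
  ∑ j ∈ Finset.range (m + 1), C (h.coeff j * γ ^ j) * ((X + C δ) ^ (m + j) * (X + C δ') ^ (m - j))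

variable {m : ℕ} {γ δ δ' : K} {h : K[X]}

lemma natDegree_mobiusNumerator_le : (mobiusNumerator m γ δ δ' h).natDegree ≤ 2 * m := by
  refine natDegree_sum_le_of_forall_le _ _ fun j hj => ?_
  have hj : j ≤ m := Nat.lt_succ_iff.1 (Finset.mem_range.1 hj)
  refine natDegree_C_mul_le _ _ |>.trans <| natDegree_mul_le.trans ?_
  refine (add_le_add natDegree_pow_le natDegree_pow_le).trans ?_
  simp only [natDegree_X_add_C]
  omega

lemma coeff_mobiusNumerator (hh : h.natDegree ≤ m) :
    (mobiusNumerator m γ δ δ' h).coeff (2 * m) = h.eval γ := by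
  rw [mobiusNumerator, finsetSum_coeff, eval_eq_sum_range' (Nat.lt_succ_of_le hh)]
  refine Finset.sum_congr rfl fun j hj => ?_
  have hj : j ≤ m := Nat.lt_succ_iff.1 (Finset.mem_range.1 hj)
  have hmonic := ((monic_X_add_C δ).pow (m + j)).mul ((monic_X_add_C δ').pow (m - j))
  have hdeg : ((X + C δ) ^ (m + j) * (X + C δ') ^ (m - j)).natDegree = 2 * m := by
    rw [((monic_X_add_C δ).pow _).natDegree_mul ((monic_X_add_C δ').pow _),
      natDegree_pow, natDegree_pow, natDegree_X_add_C, natDegree_X_add_C]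
    omega
  rw [coeff_C_mul, ← hdeg, hmonic.coeff_natDegree, mul_one]

lemma eval_mobiusNumerator (hh : h.natDegree ≤ m) {x β : K} (hx : γ * (x + δ) = β * (x + δ')) :
    (mobiusNumerator m γ δ δ' h).eval x = ((x + δ) * (x + δ')) ^ m * h.eval β := by
  rw [mobiusNumerator, eval_finsetSum, eval_eq_sum_range' (Nat.lt_succ_of_le hh), Finset.mul_sum]
  refine Finset.sum_congr rfl fun j hj => ?_
  obtain ⟨t, rfl⟩ := Nat.exists_eq_add_of_le (Nat.lt_succ_iff.1 (Finset.mem_range.1 hj))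
  have hpow : γ ^ j * (x + δ) ^ j = β ^ j * (x + δ') ^ j := by rw [← mul_pow, ← mul_pow, hx]
  simp only [eval_mul, eval_C, eval_pow, eval_add, eval_X, Nat.add_sub_cancel_left, mul_pow]
  linear_combination (h.coeff j * (x + δ) ^ (j + t) * (x + δ') ^ t) * hpow

end Mobius

section Frobenius

variable (F : Type*) {K : Type*} [Field F] [Fintype F] [Field K] [Fintype K] [Algebra F K]

local notation "σ" => FiniteField.frobeniusAlgEquivOfAlgebraic F K

lemma mem_range_algebraMap_of_frobenius_eq {x : K} (hx : σ x = x) :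
    x ∈ Set.range (algebraMap F K) := by
  refine (IsGalois.mem_range_algebraMap_iff_fixed x).2 fun g => ?_
  obtain ⟨n, rfl⟩ := (FiniteField.bijective_frobeniusAlgEquivOfAlgebraic_pow F K).2 g
  rw [AlgEquiv.coe_pow]
  exact Function.iterate_fixed hx _

lemma mul_frobenius_eq_one {y : K} (hy : y ^ (Fintype.card F + 1) = 1) : y * σ y = 1 := by
  rwa [FiniteField.frobeniusAlgEquivOfAlgebraic_apply, ← pow_succ']

variable {F} (hFK : Module.finrank F K = 2)
include hFK

lemma frobenius_frobenius (x : K) : σ (σ x) = x := by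
  simp only [FiniteField.frobeniusAlgEquivOfAlgebraic_apply, ← pow_mul, ← sq, ← hFK,
    ← Module.card_eq_pow_finrank, FiniteField.pow_card]

lemma algebraMap_trace_eq_add_pow (x : K) :
    algebraMap F K (Algebra.trace F K x) = x + x ^ Fintype.card F := by
  simp [FiniteField.algebraMap_trace_eq_sum_pow, hFK, Finset.sum_range_succ]

lemma algebraMap_norm_eq_mul_pow (x : K) :
    algebraMap F K (Algebra.norm F x) = x * x ^ Fintype.card F := by
  simp [FiniteField.algebraMap_norm_eq_prod_pow, hFK, Finset.prod_range_succ]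

lemma finrank_ker_trace : Module.finrank F (LinearMap.ker (Algebra.trace F K)) = 1 := by
  have := LinearMap.finrank_range_add_finrank_ker (Algebra.trace F K)
  rw [LinearMap.range_eq_top.2 (Algebra.trace_surjective F K), finrank_top,
    Module.finrank_self, hFK] at this
  omega

lemma exists_notMem_range_algebraMap : ∃ δ : K, δ ∉ Set.range (algebraMap F K) := by
  by_contra! h
  have hle := Fintype.card_le_of_surjective _ fun y => h y
  rw [Module.card_eq_pow_finrank (K := F) (V := K), hFK] at hle
  have := Fintype.one_lt_card (α := F)
  nlinarith

lemma exists_mul_algebraMap_add_eq {γ β δ : K} (hγ : γ ^ (Fintype.card F + 1) = 1)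
    (hβ : β ^ (Fintype.card F + 1) = 1) (hβγ : β ≠ γ) :
    ∃ a : F, γ * (algebraMap F K a + δ) = β * (algebraMap F K a + σ δ) := by
  obtain ⟨x, hsolve⟩ : ∃ x, ∀ y, γ * (y + δ) = β * (y + σ δ) ↔ y = x :=
    ⟨(β * σ δ - γ * δ) / (γ - β), fun y => by
      rw [eq_div_iff (sub_ne_zero.2 hβγ.symm)]
      constructor <;> intro h <;> linear_combination h⟩
  have hx := (hsolve x).2 rfl
  -- `σ` maps solutions to solutions, because `σ γ = γ⁻¹` and `σ β = β⁻¹`.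
  have hσx : σ x = x := by
    refine (hsolve _).1 ?_
    have := congrArg σ hx
    simp only [map_mul, map_add, frobenius_frobenius hFK] at this
    linear_combination -γ * β * this + β * (σ x + σ δ) * mul_frobenius_eq_one F hγ -
      γ * (σ x + δ) * mul_frobenius_eq_one F hβ
  obtain ⟨a, ha⟩ := mem_range_algebraMap_of_frobenius_eq F hσx
  exact ⟨a, ha ▸ hx⟩

lemma exists_coeff_eq_trace (R : K[X]) :
    ∃ f : F[X], f.natDegree ≤ R.natDegree ∧ (∀ n, f.coeff n = Algebra.trace F K (R.coeff n)) ∧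
      ∀ a : F, f.eval a = Algebra.trace F K (R.eval (algebraMap F K a)) := by
  have hσ (y : K) : y + σ y = algebraMap F K (Algebra.trace F K y) := by
    rw [algebraMap_trace_eq_add_pow hFK, FiniteField.frobeniusAlgEquivOfAlgebraic_apply]
  obtain ⟨f, hf⟩ := (mem_lifts (R + R.map (σ : K →+* K))).1 <|
    (lifts_iff_coeff_lifts _).2 fun n => ⟨_, by simpa using (hσ (R.coeff n)).symm⟩
  have hinj := (algebraMap F K).injective
  refine ⟨f, ?_, fun n => hinj ?_, fun a => hinj ?_⟩
  · rw [← natDegree_map_eq_of_injective hinj, hf]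
    exact (natDegree_add_le _ _).trans (max_le le_rfl natDegree_map_le)
  · rw [← coeff_map, hf, coeff_add, coeff_map]
    exact hσ _
  · have hfix : eval₂ (σ : K →+* K) (algebraMap F K a) R = σ (R.eval (algebraMap F K a)) := by
      conv_lhs => rw [← AlgEquiv.commutes σ a]
      exact eval₂_at_apply _ _
    rw [← eval₂_at_apply, ← eval_map, hf, eval_add, eval_map, hfix]
    exact hσ _

end Frobenius

section GRS

variable {F K : Type*} [Field F] [CommRing K] [Algebra F K] {q : ℕ}

noncomputable def grsEncode (a : Fin q → F) (θ : Fin (q + 1) → F) (k : ℕ) :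
    F[X] →ₗ[F] Fin (q + 1) → K where
  toFun f i := algebraMap F K
    (θ i * (Fin.snoc (fun j => f.eval (a j)) (f.coeff (k - 1)) : Fin (q + 1) → F) i)
  map_add' f g := by
    ext i
    refine Fin.lastCases ?_ (fun j => ?_) i <;> simp [mul_add]
  map_smul' c f := by
    ext i
    refine Fin.lastCases ?_ (fun j => ?_) i <;> simp [Algebra.smul_def, mul_left_comm]

lemma isGRSCode_of_eq_map {k : ℕ} {a : Fin q → F} {θ : Fin (q + 1) → F}
    (ha : Function.Bijective a) (hθ : ∀ i, θ i ≠ 0) {S : Set (Fin (q + 1) → K)}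
    (hS : S = ((degreeLE F ↑(k - 1)).map (grsEncode (K := K) a θ k) : Set (Fin (q + 1) → K))) :
    IsGRSCode q k F K S :=
  ⟨a, θ, ha, hθ, by ext w; simp [hS, mem_degreeLE, grsEncode, eq_comm]⟩

lemma finrank_degreeLE (n : ℕ) : Module.finrank F (degreeLE F ↑n) = n + 1 := by
  rw [← degreeLT_succ_eq_degreeLE, (degreeLTEquiv F (n + 1)).finrank_eq, Module.finrank_fin_fun]

lemma finrank_map_grsEncode_le (a : Fin q → F) (θ : Fin (q + 1) → F) (k n : ℕ) :
    Module.finrank F ((degreeLE F ↑n).map (grsEncode (K := K) a θ k)) ≤ n + 1 := by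
  have : Module.Finite F (degreeLE F ↑n) := Module.finite_of_finrank_eq_succ (finrank_degreeLE n)
  exact (Submodule.finrank_map_le _ _).trans (finrank_degreeLE n).le

end GRS

section TraceCode

variable (F : Type*) {K : Type*} [Field F] [Field K] [Algebra F K] {ι : Type*}

noncomputable def traceEval (α : ι → K) : K[X] →ₗ[F] ι → K :=
  LinearMap.pi fun i =>
    Algebra.linearMap F K ∘ₗ Algebra.trace F K ∘ₗ (leval (α i)).restrictScalars F

lemma traceEval_apply (α : ι → K) (h : K[X]) (i : ι) :
    traceEval F α h i = algebraMap F K (Algebra.trace F K (h.eval (α i))) :=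
  rfl

noncomputable def traceCode (α : ι → K) (m : ℕ) : Submodule F (ι → K) :=
  ((degreeLE K ↑m).restrictScalars F).map (traceEval F α)

variable {F} [Fintype F] [Fintype K] (hFK : Module.finrank F K = 2) {α : ι → K}
  (hα : Function.Injective α) (hα1 : ∀ i, α i ^ (Fintype.card F + 1) = 1)
include hFK hα hα1

lemma eq_C_of_traceEval_eq_zero {m : ℕ} {h : K[X]} (hh : h.natDegree ≤ m) (s : Finset ι)
    (hs : ∀ i ∈ s, traceEval F α h i = 0) (hcard : 2 * m < s.card) :
    h = C (h.coeff 0) := by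
  refine eq_C_of_trace_eval_eq_zero (σ := FiniteField.frobeniusAlgEquivOfAlgebraic F K) hα
    (fun i => mul_frobenius_eq_one F (hα1 i)) hh s (fun i hi => ?_) hcard
  rw [RingHom.coe_coe, FiniteField.frobeniusAlgEquivOfAlgebraic_apply,
    ← algebraMap_trace_eq_add_pow hFK, ← traceEval_apply, hs i hi]

lemma le_hammingNorm_of_mem_traceCode [Fintype ι] [DecidableEq K] {m : ℕ} {w : ι → K}
    (hw : w ∈ traceCode F α m) (hw0 : w ≠ 0) : Fintype.card ι - 2 * m ≤ hammingNorm w := by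
  obtain ⟨h, hh, rfl⟩ := hw
  have hzeros : (Finset.univ.filter fun i => traceEval F α h i = 0).card ≤ 2 * m := by
    by_contra! hcard
    obtain ⟨i₀, hi₀⟩ := Finset.card_pos.1 (Nat.zero_lt_of_lt hcard)
    have hC := eq_C_of_traceEval_eq_zero hFK hα hα1
      (natDegree_le_of_degree_le (mem_degreeLE.1 hh)) _ (fun i hi => (Finset.mem_filter.1 hi).2)
      hcard
    refine hw0 (funext fun i => ?_)
    rw [Pi.zero_apply, ← (Finset.mem_filter.1 hi₀).2, traceEval_apply, traceEval_apply, hC,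
      eval_C, eval_C]
  have hsplit := Finset.card_filter_add_card_filter_not (s := Finset.univ)
    (fun i => traceEval F α h i = 0)
  rw [Finset.card_univ] at hsplit
  have : hammingNorm (traceEval F α h) =
      (Finset.univ.filter fun i => ¬ traceEval F α h i = 0).card := rfl
  omega

lemma two_mul_add_one_le_finrank_traceCode [Fintype ι] {m : ℕ} (hm : 2 * m < Fintype.card ι) :
    2 * m + 1 ≤ Module.finrank F (traceCode F α m) := by
  rw [traceCode]
  set V := (degreeLE K ↑m).restrictScalars F
  have hV : Module.finrank F V = 2 * (m + 1) := by
    rw [show Module.finrank F V = Module.finrank F (degreeLE K ↑m) from rfl,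
      ← Module.finrank_mul_finrank F K, hFK, finrank_degreeLE]
  let embedC : K →ₗ[F] V := LinearMap.codRestrict V ((Algebra.linearMap K K[X]).restrictScalars F)
    fun c => mem_degreeLE.2 (degree_C_le.trans (WithBot.coe_le_coe.2 m.zero_le))
  have hker : LinearMap.ker ((traceEval F α).domRestrict V) ≤
      (LinearMap.ker (Algebra.trace F K)).map embedC := by
    rintro ⟨h, hh⟩ hker
    have hzero (i : ι) : traceEval F α h i = 0 := congrFun hker i
    have hC := eq_C_of_traceEval_eq_zero hFK hα hα1
      (natDegree_le_of_degree_le (mem_degreeLE.1 hh)) Finset.univ (fun i _ => hzero i)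
      (by rwa [Finset.card_univ])
    obtain ⟨i₀⟩ : Nonempty ι := Fintype.card_pos_iff.1 (Nat.zero_lt_of_lt hm)
    refine ⟨h.coeff 0, ?_, Subtype.ext hC.symm⟩
    have hi₀ := hzero i₀
    rwa [traceEval_apply, hC, eval_C, map_eq_zero] at hi₀
  have : FiniteDimensional F V := Module.finite_of_finrank_pos (by omega)
  have hrank := LinearMap.finrank_range_add_finrank_ker ((traceEval F α).domRestrict V)
  rw [LinearMap.range_domRestrict, hV] at hrank
  have := (Submodule.finrank_mono hker).trans <|
    (Submodule.finrank_map_le _ _).trans (finrank_ker_trace hFK).le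
  omega

end TraceCode

section TraceCodeIsGRS

variable {F K : Type*} [Field F] [Fintype F] [Field K] [Fintype K] [Algebra F K]
  (hFK : Module.finrank F K = 2) {q : ℕ} (hq : Fintype.card F = q) {α : Fin (q + 1) → K}
  (hα : Function.Injective α) (hα1 : ∀ i, α i ^ (Fintype.card F + 1) = 1)
include hFK hq hα hα1

local notation "σ" => FiniteField.frobeniusAlgEquivOfAlgebraic F K

lemma exists_bijective_mobius_points {δ : K} (hδ : δ ∉ Set.range (algebraMap F K)) :
    ∃ a : Fin q → F, Function.Bijective a ∧ ∀ j, α (Fin.last q) * (algebraMap F K (a j) + δ) =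
      α j.castSucc * (algebraMap F K (a j) + σ δ) := by
  have hσδ (b : F) : algebraMap F K b + σ δ ≠ 0 := fun hb => hδ ⟨-b, by
    rw [map_neg, ← frobenius_frobenius hFK δ, eq_neg_of_add_eq_zero_right hb, map_neg,
      AlgEquiv.commutes]⟩
  choose a ha using fun j : Fin q => exists_mul_algebraMap_add_eq hFK (δ := δ)
    (hα1 (Fin.last q)) (hα1 j.castSucc) (hα.ne (Fin.castSucc_lt_last j).ne)
  refine ⟨a, (Fintype.bijective_iff_injective_and_card a).2 ⟨fun j j' hjj' => ?_, by simp [hq]⟩,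
    ha⟩
  have hj := ha j
  rw [hjj', ha j'] at hj
  exact Fin.castSucc_injective _ (hα (mul_right_cancel₀ (hσδ _) hj).symm)

theorem exists_traceCode_le_map_grsEncode (m : ℕ) :
    ∃ (a : Fin q → F) (θ : Fin (q + 1) → F), Function.Bijective a ∧ (∀ i, θ i ≠ 0) ∧
      traceCode F α m ≤ (degreeLE F ↑(2 * m)).map (grsEncode a θ (2 * m + 1)) := by
  obtain ⟨δ, hδ⟩ := exists_notMem_range_algebraMap hFK
  obtain ⟨a, ha, hpts⟩ := exists_bijective_mobius_points hFK hq hα hα1 hδ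
  set n : Fin q → F := fun j => Algebra.norm F (algebraMap F K (a j) + δ)
  have hn (j : Fin q) : n j ≠ 0 := Algebra.norm_ne_zero_iff.2 fun h0 => hδ ⟨-a j, by
    rw [map_neg]
    linear_combination -h0⟩
  have hnorm (j : Fin q) :
      (algebraMap F K (a j) + δ) * (algebraMap F K (a j) + σ δ) = algebraMap F K (n j) := by
    rw [algebraMap_norm_eq_mul_pow hFK, ← FiniteField.frobeniusAlgEquivOfAlgebraic_apply, map_add,
      AlgEquiv.commutes]
  refine ⟨a, Fin.snoc (fun j => (n j ^ m)⁻¹) 1, ha, Fin.lastCases (by simp) fun j => by simp [hn],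
    ?_⟩
  rintro _ ⟨h, hh, rfl⟩
  have hh' : h.natDegree ≤ m := natDegree_le_of_degree_le (mem_degreeLE.1 hh)
  obtain ⟨f, hfdeg, hfcoeff, hfeval⟩ :=
    exists_coeff_eq_trace hFK (mobiusNumerator m (α (Fin.last q)) δ (σ δ) h)
  refine ⟨f, mem_degreeLE.2 (degree_le_of_natDegree_le
    (hfdeg.trans natDegree_mobiusNumerator_le)), funext fun i => ?_⟩
  refine Fin.lastCases ?_ (fun j => ?_) i
  · simp [grsEncode, traceEval_apply, hfcoeff, coeff_mobiusNumerator hh']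
  · simp only [grsEncode, LinearMap.coe_mk, AddHom.coe_mk, Fin.snoc_castSucc, traceEval_apply,
      hfeval, eval_mobiusNumerator hh' (hpts j), hnorm, ← map_pow, ← Algebra.smul_def, map_smul,
      smul_eq_mul, inv_mul_cancel_left₀ (pow_ne_zero _ (hn j))]

end TraceCodeIsGRS

theorem grs_of_trace_evaluation_code_odd_general
    (q k : ℕ) (F K : Type*) [Field F] [Fintype F] [Field K] [Fintype K]
    [DecidableEq K] [Algebra F K]
    (hF : Fintype.card F = q) (hK : Fintype.card K = q ^ 2)
    (hkodd : Odd k) (hkq : k ≤ q)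
    (α : Fin (q + 1) → K) (hαinj : Function.Injective α)
    (hαroot : ∀ i, α i ^ (q + 1) = 1)
    (Code : Set (Fin (q + 1) → K))
    (hCode : Code = { w | ∃ h : Polynomial K, h.degree ≤ ((k - 1) / 2 : ℕ) ∧
      w = fun i => h.eval (α i) + (h.eval (α i)) ^ q }) :
    (∃ V : Submodule F (Fin (q + 1) → K), (V : Set (Fin (q + 1) → K)) = Code ∧
       Module.finrank F V = k) ∧
    (∀ w ∈ Code, w ≠ 0 → q + 2 - k ≤ hammingNorm w) ∧
    IsGRSCode q k F K Code := by
  obtain ⟨m, rfl⟩ := hkodd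
  have hFK : Module.finrank F K = 2 :=
    Nat.pow_right_injective (Fintype.one_lt_card (α := F))
      (by dsimp only; rw [← Module.card_eq_pow_finrank, hK, hF])
  have hα1 : ∀ i, α i ^ (Fintype.card F + 1) = 1 := hF ▸ hαroot
  have hCode' : Code = traceCode F α m := by
    ext w
    simp [hCode, traceCode, mem_degreeLE, traceEval_apply, algebraMap_trace_eq_add_pow hFK, hF,
      eq_comm, funext_iff]
  obtain ⟨a, θ, ha, hθ, hle⟩ := exists_traceCode_le_map_grsEncode hFK hF hαinj hα1 m
  have hlow := two_mul_add_one_le_finrank_traceCode hFK hαinj hα1 (m := m)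
    (by rw [Fintype.card_fin]; omega)
  have hup := finrank_map_grsEncode_le (K := K) a θ (2 * m + 1) (2 * m)
  have heq := Submodule.eq_of_le_of_finrank_le hle (by omega)
  refine ⟨⟨_, hCode'.symm, le_antisymm (by rw [heq]; exact hup) hlow⟩, fun w hw hw0 => ?_,
    isGRSCode_of_eq_map ha hθ ?_⟩
  · have := le_hammingNorm_of_mem_traceCode hFK hαinj hα1 (hCode' ▸ hw) hw0
    simp only [Fintype.card_fin] at this
    omega
  · rw [hCode', heq, Nat.add_sub_cancel]

/-- Let `q` be a prime power, `F = 𝔽_q ⊆ K = 𝔽_{q²}`, and let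
`α 1, …, α (q+1)` be the `q+1` distinct `(q+1)`-st roots of unity in `K`.  If `k` is odd
with `1 ≤ k ≤ q`, then the code
`C = {(h(α₁)+h(α₁)^q, …, h(α_{q+1})+h(α_{q+1})^q) : h ∈ K[X], deg h ≤ (k−1)/2}`
is a `k`-dimensional `F`-linear subspace of `F^{q+1}` (embedded in `K^{q+1}`) with minimum
distance `q+2−k`, i.e. a `[q+1,k,q+2−k]_q` MDS code, and moreover `C` is a generalised
Reed–Solomon code over `F`. -/
theorem grs_of_trace_evaluation_code_odd
    (q k : ℕ) (F K : Type*) [Field F] [Fintype F] [Field K] [Fintype K]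
    [DecidableEq K] [Algebra F K]
    (hF : Fintype.card F = q) (hK : Fintype.card K = q ^ 2)
    (hkodd : Odd k) (hk1 : 1 ≤ k) (hkq : k ≤ q)
    (α : Fin (q + 1) → K) (hαinj : Function.Injective α)
    (hαroot : ∀ i, α i ^ (q + 1) = 1)
    (Code : Set (Fin (q + 1) → K))
    (hCode : Code = { w | ∃ h : Polynomial K, h.degree ≤ ((k - 1) / 2 : ℕ) ∧
      w = fun i => h.eval (α i) + (h.eval (α i)) ^ q }) :
    (∃ V : Submodule F (Fin (q + 1) → K), (V : Set (Fin (q + 1) → K)) = Code ∧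
       Module.finrank F V = k) ∧
    (∀ w ∈ Code, w ≠ 0 → q + 2 - k ≤ hammingNorm w) ∧
    IsGRSCode q k F K Code :=
  grs_of_trace_evaluation_code_odd_general q k F K hF hK hkodd hkq α hαinj hαroot Code hCode
end

section
/- Let q be a prime power, let F_q ⊆ F_{q²} be the finite fields with q and q² elements, let α_1, …, α_{q+1} be the (q+1) distinct (q+1)-st roots of unity in F_{q²}, and for each i choose ω_i ∈ F_{q²} with α_i = ω_i^{q−1}. If k is even with 1 ≤ k ≤ q, then the code C = {(ω_1^q h(α_1)+ω_1 h(α_1)^q, …, ω_{q+1}^q h(α_{q+1})+ω_{q+1} h(α_{q+1})^q) : h ∈ F_{q²}[X], deg h ≤ k/2 − 1} is a k-dimensional F_q-linear subspace of F_q^{q+1} with minimum distance q+2−k (i.e. a [q+1,k,q+2−k]_q MDS code), and moreover C is a generalised Reed–Solomon code over F_q. -/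
open Polynomial

/-!
Write `σ x = x ^ q` and `m = k / 2 - 1`. On the unit circle `σ x = x⁻¹`, and `σ ω_i = ω_i α_i`,
so the `i`-th coordinate of the codeword of `h` is `ω_i α_i⁻ᵐ g(α_i)` with
`g = X ^ (m + 1) h + X ^ m h^σ(1 / X)`, a polynomial of degree `≤ k - 1` that vanishes only if `h`
does. Hence a nonzero codeword has at most `k - 1` zero coordinates; this gives the minimum
distance and, as `h ↦ codeword` is then injective on an `F`-space of dimension `2 (m + 1) = k`,
the dimension.

The Cayley transform `x ↦ (B - δ B^q x) / (x - δ)`, with `δ = α_{q+1}` and any `B ≠ δ² B^q`, maps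
the other `q` roots of unity injectively into `F`. Pulling `g` back along it gives a polynomial
`f` of degree `≤ k - 1` which takes values in `F` at the `q` points of `F`, so `f ∈ F[X]`, and the
codeword becomes `(θ_i f(a_i))_{i ≤ q}` followed by `θ_{q+1} f_{k-1}`. So `C` lies in a GRS code of
dimension at most `k`, and the two are equal by counting dimensions.
-/

namespace Polynomial

section MobiusSubst

variable {R : Type*} [CommRing R]

/-- `(X - c) ^ t * P ((a X + b) / (X - c))` with the denominators cleared. -/
noncomputable def mobiusSubst (t : ℕ) (P : R[X]) (a b c : R) : R[X] :=
  ∑ s ∈ Finset.range (t + 1), C (P.coeff s) * (C a * X + C b) ^ s * (X - C c) ^ (t - s)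

theorem natDegree_mobiusSubst_le (t : ℕ) (P : R[X]) (a b c : R) :
    (mobiusSubst t P a b c).natDegree ≤ t := by
  refine natDegree_sum_le_of_forall_le _ _ fun s hs => ?_
  have hst : s ≤ t := Nat.lt_succ_iff.1 (Finset.mem_range.1 hs)
  calc _ ≤ s * 1 + (t - s) * 1 :=
        natDegree_mul_le_of_le
          ((natDegree_C_mul_le _ _).trans (natDegree_pow_le_of_le _ natDegree_linear_le))
          (natDegree_pow_le_of_le _ (natDegree_X_sub_C_le c))
    _ = t := by omega

theorem coeff_mobiusSubst_self {t : ℕ} {P : R[X]} (hP : P.natDegree ≤ t) (a b c : R) :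
    (mobiusSubst t P a b c).coeff t = P.eval a := by
  rw [mobiusSubst, finsetSum_coeff, eval_eq_sum_range' (Nat.lt_succ_of_le hP)]
  refine Finset.sum_congr rfl fun s hs => ?_
  have hst : s ≤ t := Nat.lt_succ_iff.1 (Finset.mem_range.1 hs)
  have hlin : ((C a * X + C b) ^ s).coeff s = a ^ s := by
    simpa using coeff_pow_of_natDegree_le (m := s) (natDegree_linear_le (a := a) (b := b))
  have hmonic : ((X - C c) ^ (t - s)).coeff (t - s) = 1 := by
    simpa using coeff_pow_of_natDegree_le (m := t - s) (natDegree_X_sub_C_le c)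
  have hprod := coeff_mul_add_eq_of_natDegree_le
    (natDegree_pow_le_of_le s (natDegree_linear_le (a := a) (b := b)) |>.trans_eq (mul_one s))
    (natDegree_pow_le_of_le (t - s) (natDegree_X_sub_C_le c) |>.trans_eq (mul_one _))
  rw [Nat.add_sub_of_le hst, hlin, hmonic, mul_one] at hprod
  rw [mul_assoc, coeff_C_mul, hprod]

theorem eval_mobiusSubst {K : Type*} [Field K] {t : ℕ} {P : K[X]} (hP : P.natDegree ≤ t)
    (a b : K) {c y : K} (hy : y ≠ c) :
    (mobiusSubst t P a b c).eval y = (y - c) ^ t * P.eval ((a * y + b) / (y - c)) := by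
  rw [mobiusSubst, eval_finsetSum, eval_eq_sum_range' (Nat.lt_succ_of_le hP), Finset.mul_sum]
  refine Finset.sum_congr rfl fun s hs => ?_
  have hst : s ≤ t := Nat.lt_succ_iff.1 (Finset.mem_range.1 hs)
  simp only [eval_mul, eval_pow, eval_add, eval_sub, eval_C, eval_X]
  rw [div_pow, ← Nat.add_sub_of_le hst, pow_add, Nat.add_sub_cancel_left]
  field_simp

end MobiusSubst

theorem card_sub_natDegree_le_hammingNorm {K ι : Type*} [Field K] [DecidableEq K] [Fintype ι]
    {α : ι → K} (hα : Function.Injective α) {g : K[X]} (hg : g ≠ 0) {w : ι → K}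
    (hw : ∀ i, w i = 0 → g.eval (α i) = 0) : Fintype.card ι - g.natDegree ≤ hammingNorm w := by
  have hzeros : (Finset.univ.filter fun i => w i = 0).card ≤ g.natDegree := by
    rw [← Finset.card_image_of_injective _ hα]
    refine card_le_degree_of_subset_roots fun x hx => ?_
    obtain ⟨i, hi, rfl⟩ := Finset.mem_image.1 hx
    exact (mem_roots hg).2 (hw i (Finset.mem_filter.1 hi).2)
  have hsplit := Finset.card_filter_add_card_filter_not (s := Finset.univ) (fun i => w i = 0)
  rw [Finset.card_univ] at hsplit
  have hnorm : hammingNorm w = (Finset.univ.filter fun i => ¬w i = 0).card := rfl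
  omega

theorem exists_map_eq_of_eval_mem_range {F K ι : Type*} [Field F] [Field K] [Algebra F K]
    [Fintype ι] {a : ι → F} (ha : Function.Injective a) {p : K[X]}
    (hp : p.natDegree < Fintype.card ι)
    (hval : ∀ i, p.eval (algebraMap F K (a i)) ∈ Set.range (algebraMap F K)) :
    ∃ f : F[X], f.map (algebraMap F K) = p := by
  classical
  choose v hv using hval
  set f := Lagrange.interpolate Finset.univ a v
  have hf : f.natDegree < Fintype.card ι := by
    have := Lagrange.degree_interpolate_lt v (ha.injOn (s := ↑(Finset.univ : Finset ι)))
    rw [Finset.card_univ] at this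
    rcases eq_or_ne f 0 with h0 | h0
    · rw [h0, natDegree_zero]; omega
    · exact (natDegree_lt_iff_degree_lt h0).2 this
  refine ⟨f, sub_eq_zero.1 <| eq_zero_of_natDegree_lt_card_of_eval_eq_zero _
    ((algebraMap F K).injective.comp ha) (fun i => ?_) ?_⟩
  · rw [eval_sub, sub_eq_zero, Function.comp_apply, eval_map, eval₂_at_apply,
      Lagrange.eval_interpolate_at_node v ha.injOn (Finset.mem_univ i), hv]
  · exact (natDegree_sub_le _ _).trans_lt (max_lt ((natDegree_map_le).trans_lt hf) hp)

theorem mem_degreeLT_succ_iff_natDegree_le {R : Type*} [Semiring R] {n : ℕ} {p : R[X]} :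
    p ∈ degreeLT R (n + 1) ↔ p.natDegree ≤ n := by
  rw [degreeLT_succ_eq_degreeLE, mem_degreeLE, natDegree_le_iff_degree_le]

theorem coe_range_comp_degreeLT {S R N : Type*} [CommSemiring S] [Semiring R] [Algebra S R]
    [AddCommMonoid N] [Module S N] (L : R[X] →ₗ[S] N) (n : ℕ) :
    (LinearMap.range (L ∘ₗ (degreeLT R (n + 1)).subtype.restrictScalars S) : Set N) =
      {w | ∃ p : R[X], p.degree ≤ n ∧ w = L p} := by
  have hmem : ∀ p : R[X], p ∈ degreeLT R (n + 1) ↔ p.degree ≤ n := fun p => by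
    rw [degreeLT_succ_eq_degreeLE, mem_degreeLE]
  ext w
  constructor
  · rintro ⟨⟨p, hp⟩, rfl⟩
    exact ⟨p, (hmem p).1 hp, rfl⟩
  · rintro ⟨p, hp, rfl⟩
    exact ⟨⟨p, (hmem p).2 hp⟩, rfl⟩

end Polynomial

section Conjugation

variable {K : Type*} [Field K] (σ : K →+* K)

noncomputable def traceLift (m : ℕ) (h : K[X]) : K[X] :=
  X ^ (m + 1) * h + reflect m (h.map σ)

variable {σ}

theorem natDegree_traceLift_le {m : ℕ} {h : K[X]} (hh : h.natDegree ≤ m) :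
    (traceLift σ m h).natDegree ≤ 2 * m + 1 := by
  refine (natDegree_add_le _ _).trans (max_le ?_ ?_)
  · exact (natDegree_mul_le_of_le (natDegree_X_pow_le (m + 1)) hh).trans (by omega)
  · exact natDegree_reflect_le.trans (max_le (by omega) (natDegree_map_le.trans (by omega)))

theorem traceLift_ne_zero {m : ℕ} {h : K[X]} (hh : h.natDegree ≤ m) (h0 : h ≠ 0) :
    traceLift σ m h ≠ 0 := by
  intro hzero
  have hlead : (X ^ (m + 1) * h).natDegree = h.natDegree + (m + 1) := natDegree_X_pow_mul (m + 1) h0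
  have hrefl : (reflect m (h.map σ)).natDegree ≤ m :=
    natDegree_reflect_le.trans (max_le le_rfl (natDegree_map_le.trans hh))
  rw [traceLift, add_eq_zero_iff_eq_neg] at hzero
  rw [hzero, natDegree_neg] at hlead
  omega

theorem eval_traceLift {m : ℕ} {h : K[X]} (hh : h.natDegree ≤ m) {x : K} (hx : σ x * x = 1) :
    (traceLift σ m h).eval x = x ^ m * (x * h.eval x + σ (h.eval x)) := by
  have hx0 : x ≠ 0 := right_ne_zero_of_mul_eq_one hx
  let _ : Invertible x⁻¹ := invertibleOfNonzero (inv_ne_zero hx0)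
  have hrefl := eval₂_reflect_mul_pow (RingHom.id K) x⁻¹ m (h.map σ) (natDegree_map_le.trans hh)
  rw [invOf_eq_inv, inv_inv, ← eq_inv_of_mul_eq_one_left hx, eval₂_id, eval₂_id, eval_map,
    eval₂_at_apply] at hrefl
  have hpow : σ x ^ m * x ^ m = 1 := by rw [← mul_pow, hx, one_pow]
  rw [traceLift, eval_add, eval_mul, eval_pow, eval_X, ← hrefl]
  linear_combination (-(reflect m (h.map σ)).eval x) * hpow

theorem map_trace_eq_self (hσ : ∀ y, σ (σ y) = y) (ω y : K) :
    σ (σ ω * y + ω * σ y) = σ ω * y + ω * σ y := by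
  rw [map_add, map_mul, map_mul, hσ, hσ, add_comm, mul_comm ω, mul_comm (σ ω)]

theorem exists_sub_sq_mul_map_ne_zero (hσ : ∃ c, σ c ≠ c) (δ : K) : ∃ B, B - δ ^ 2 * σ B ≠ 0 := by
  obtain ⟨c, hc⟩ := hσ
  by_cases hδ : 1 - δ ^ 2 * σ 1 = 0
  · refine ⟨c, fun h => hc ?_⟩
    rw [map_one, mul_one, sub_eq_zero] at hδ
    rw [← hδ, one_mul, sub_eq_zero] at h
    exact h.symm
  · exact ⟨1, hδ⟩

variable (σ)

noncomputable def cayley (δ B x : K) : K := (B - δ * σ B * x) / (x - δ)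

variable {σ} {δ B : K}

theorem cayley_add_mul {x : K} (hx : x ≠ δ) :
    cayley σ δ B x + δ * σ B = (B - δ ^ 2 * σ B) / (x - δ) := by
  rw [cayley]
  field_simp
  ring

theorem mul_cayley_add {x : K} (hx : x ≠ δ) :
    δ * cayley σ δ B x + B = x * (B - δ ^ 2 * σ B) / (x - δ) := by
  rw [cayley]
  field_simp
  ring

theorem cayley_injOn (hN : B - δ ^ 2 * σ B ≠ 0) : Set.InjOn (cayley σ δ B) {x | x ≠ δ} := by
  intro x hx y hy hxy
  have h := congrArg (· + δ * σ B) hxy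
  simp only [cayley_add_mul hx, cayley_add_mul hy] at h
  rw [div_eq_div_iff (sub_ne_zero.2 hx) (sub_ne_zero.2 hy)] at h
  exact sub_left_injective (mul_left_cancel₀ hN h.symm)

theorem map_cayley (hδ : σ δ * δ = 1) (hB : σ (σ B) = B) {x : K} (hx : σ x * x = 1)
    (hxδ : x ≠ δ) : σ (cayley σ δ B x) = cayley σ δ B x := by
  have hx0 : x ≠ 0 := right_ne_zero_of_mul_eq_one hx
  have hδ0 : δ ≠ 0 := right_ne_zero_of_mul_eq_one hδ
  have hxδ' : x - δ ≠ 0 := sub_ne_zero.2 hxδ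
  have hxδ'' : x⁻¹ - δ⁻¹ ≠ 0 := sub_ne_zero.2 fun h => hxδ (inv_injective h)
  rw [cayley, map_div₀, map_sub, map_mul, map_mul, map_sub, hB, eq_inv_of_mul_eq_one_left hx,
    eq_inv_of_mul_eq_one_left hδ, div_eq_div_iff hxδ'' hxδ']
  field_simp
  ring

theorem eval_mobiusSubst_cayley (hN : B - δ ^ 2 * σ B ≠ 0) {t : ℕ} {g : K[X]}
    (hg : g.natDegree ≤ t) {x : K} (hx : x ≠ δ) :
    (mobiusSubst t g δ B (-(δ * σ B))).eval (cayley σ δ B x) * (x - δ) ^ t =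
      (B - δ ^ 2 * σ B) ^ t * g.eval x := by
  have hxδ := sub_ne_zero.2 hx
  have hshift : cayley σ δ B x - -(δ * σ B) = (B - δ ^ 2 * σ B) / (x - δ) := by
    rw [sub_neg_eq_add, cayley_add_mul hx]
  have hne : cayley σ δ B x ≠ -(δ * σ B) := by
    rw [← sub_ne_zero, hshift]; exact div_ne_zero hN hxδ
  rw [eval_mobiusSubst hg _ _ hne, hshift, mul_cayley_add hx, div_div_div_cancel_right₀ hxδ,
    mul_div_cancel_right₀ _ hN, div_pow]
  field_simp

variable (σ) in
noncomputable def cayleyWeight (δ B ν : K) (m : ℕ) (x ω : K) : K :=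
  ω * ((x - δ) / (ν * (B - δ ^ 2 * σ B))) ^ (2 * m + 1) / x ^ m

variable (σ) in
/-- The pull-back of `traceLift σ m h` along the inverse `y ↦ (δ y + B) / (y + δ σ B)` of
`cayley σ δ B`; the factor `ν ^ (2 m + 1)`, with `σ ν = ν δ`, makes the weights `σ`-fixed. -/
noncomputable def cayleyTransform (δ B ν : K) (m : ℕ) (h : K[X]) : K[X] :=
  C (ν ^ (2 * m + 1)) * mobiusSubst (2 * m + 1) (traceLift σ m h) δ B (-(δ * σ B))

variable {ν : K} {m : ℕ}

theorem natDegree_cayleyTransform_le (h : K[X]) :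
    (cayleyTransform σ δ B ν m h).natDegree ≤ 2 * m + 1 :=
  (natDegree_C_mul_le _ _).trans (natDegree_mobiusSubst_le _ _ _ _ _)

theorem cayleyWeight_ne_zero (hN : B - δ ^ 2 * σ B ≠ 0) (hν : ν ≠ 0) {x ω : K} (hx : x ≠ 0)
    (hxδ : x ≠ δ) (hω : ω ≠ 0) : cayleyWeight σ δ B ν m x ω ≠ 0 := by
  unfold cayleyWeight
  positivity

theorem map_cayleyWeight (hδ : σ δ * δ = 1) (hB : σ (σ B) = B) (hN : B - δ ^ 2 * σ B ≠ 0)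
    (hν : σ ν = ν * δ) (hν0 : ν ≠ 0) {x ω : K} (hx : σ x * x = 1) (hω : σ ω = ω * x) :
    σ (cayleyWeight σ δ B ν m x ω) = cayleyWeight σ δ B ν m x ω := by
  have hx0 : x ≠ 0 := right_ne_zero_of_mul_eq_one hx
  have hσx0 : σ x ≠ 0 := left_ne_zero_of_mul_eq_one hx
  have hδ0 : δ ≠ 0 := right_ne_zero_of_mul_eq_one hδ
  have hσN : σ (B - δ ^ 2 * σ B) = -(B - δ ^ 2 * σ B) / δ ^ 2 := by
    rw [map_sub, map_mul, map_pow, hB, eq_inv_of_mul_eq_one_left hδ]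
    field_simp
    ring
  have hρ : σ ((x - δ) / (ν * (B - δ ^ 2 * σ B))) * x = (x - δ) / (ν * (B - δ ^ 2 * σ B)) := by
    rw [map_div₀, map_mul, map_sub, hσN, hν, eq_inv_of_mul_eq_one_left hx,
      eq_inv_of_mul_eq_one_left hδ]
    generalize B - δ ^ 2 * σ B = N at hN ⊢
    field_simp
    ring
  have hpow : σ x ^ m * x ^ m = 1 := by rw [← mul_pow, hx, one_pow]
  unfold cayleyWeight
  generalize (x - δ) / (ν * (B - δ ^ 2 * σ B)) = ρ at hρ ⊢
  rw [map_div₀, map_mul, map_pow, map_pow, hω, div_eq_div_iff (pow_ne_zero _ hσx0)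
    (pow_ne_zero _ hx0)]
  conv_rhs => rw [← hρ]
  linear_combination (-(ω * σ ρ ^ (2 * m + 1) * x ^ (m + 1))) * hpow

theorem trace_eq_cayleyWeight_mul_eval (hN : B - δ ^ 2 * σ B ≠ 0) (hν : ν ≠ 0) {h : K[X]}
    (hh : h.natDegree ≤ m) {x ω : K} (hx : σ x * x = 1) (hxδ : x ≠ δ) (hω : σ ω = ω * x) :
    σ ω * h.eval x + ω * σ (h.eval x) =
      cayleyWeight σ δ B ν m x ω * (cayleyTransform σ δ B ν m h).eval (cayley σ δ B x) := by
  have hx0 : x ≠ 0 := right_ne_zero_of_mul_eq_one hx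
  have hS := eval_mobiusSubst_cayley hN (natDegree_traceLift_le (σ := σ) hh) hxδ
  rw [eval_traceLift hh hx] at hS
  rw [cayleyWeight, cayleyTransform, eval_mul, eval_C, hω]
  generalize (mobiusSubst _ _ _ _ _).eval (cayley σ δ B x) = S at hS ⊢
  generalize B - δ ^ 2 * σ B = N at hN hS ⊢
  rw [div_pow, mul_pow]
  field_simp
  linear_combination (-ω) * hS

theorem trace_eq_mul_coeff_cayleyTransform (hδ : σ δ * δ = 1) (hν : σ ν = ν * δ) (hν0 : ν ≠ 0)
    {h : K[X]} (hh : h.natDegree ≤ m) :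
    σ ν * h.eval δ + ν * σ (h.eval δ) =
      ((δ * ν ^ 2) ^ m)⁻¹ * (cayleyTransform σ δ B ν m h).coeff (2 * m + 1) := by
  have hδ0 : δ ≠ 0 := right_ne_zero_of_mul_eq_one hδ
  rw [cayleyTransform, coeff_C_mul, coeff_mobiusSubst_self (natDegree_traceLift_le hh),
    eval_traceLift hh hδ, hν]
  field_simp
  ring

end Conjugation

section FiniteField

open FiniteField

variable {F K : Type*} [Field F] [Fintype F] [Field K] [Algebra F K]

theorem mem_range_algebraMap_of_pow_card_eq_self {x : K} (hx : x ^ Fintype.card F = x) :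
    x ∈ Set.range (algebraMap F K) := by
  classical
  by_contra hxF
  have hq : 1 < Fintype.card F := Fintype.one_lt_card
  have hroots : (insert x (Finset.univ.image (algebraMap F K))).val ⊆
      (X ^ Fintype.card F - X : K[X]).roots := by
    intro y hy
    rw [mem_roots (X_pow_card_sub_X_ne_zero K hq), IsRoot, eval_sub, eval_pow, eval_X, sub_eq_zero]
    rcases Finset.mem_insert.1 hy with rfl | hy
    · exact hx
    · obtain ⟨c, -, rfl⟩ := Finset.mem_image.1 hy
      rw [← map_pow, pow_card]
  have hcard := card_le_degree_of_subset_roots hroots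
  rw [Finset.card_insert_of_notMem fun h => hxF (by simpa using h),
    Finset.card_image_of_injective _ (algebraMap F K).injective, Finset.card_univ,
    X_pow_card_sub_X_natDegree_eq K hq] at hcard
  omega

variable [Fintype K]

theorem frobeniusAlgHom_involutive (hK : Fintype.card K = Fintype.card F ^ 2) :
    Function.Involutive (frobeniusAlgHom F K) := fun x => by
  rw [coe_frobeniusAlgHom]
  dsimp only
  rw [← pow_mul, ← sq, ← hK, pow_card]

theorem exists_pow_card_ne_self (hK : Fintype.card K = Fintype.card F ^ 2) :
    ∃ c : K, c ^ Fintype.card F ≠ c := by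
  by_contra! hall
  have hle := Fintype.card_le_of_surjective _
    fun x => mem_range_algebraMap_of_pow_card_eq_self (hall x)
  have hq : 1 < Fintype.card F := Fintype.one_lt_card
  rw [hK] at hle
  nlinarith

theorem finrank_eq_two_of_card_eq_sq (hK : Fintype.card K = Fintype.card F ^ 2) :
    Module.finrank F K = 2 := by
  rw [Module.card_eq_pow_finrank (K := F)] at hK
  exact Nat.pow_right_injective (Fintype.one_lt_card (α := F)) hK

end FiniteField

section Encoders

variable {F K : Type*} [Field F] [Field K] [Algebra F K]

noncomputable def traceEncoder {ι : Type*} (σ : K →ₐ[F] K) (α ω : ι → K) :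
    K[X] →ₗ[F] ι → K where
  toFun h i := σ (ω i) * h.eval (α i) + ω i * σ (h.eval (α i))
  map_add' h₁ h₂ := by ext i; simp only [eval_add, map_add, Pi.add_apply]; ring
  map_smul' r h := by ext i; simp [Algebra.smul_def]; ring

noncomputable def grsEncoder (q k : ℕ) (a : Fin q → F) (θ : Fin (q + 1) → F) :
    F[X] →ₗ[F] Fin (q + 1) → K where
  toFun f i := algebraMap F K
    (θ i * (Fin.snoc (fun j : Fin q => f.eval (a j)) (f.coeff (k - 1)) : Fin (q + 1) → F) i)
  map_add' f g := by ext i; induction i using Fin.lastCases <;> simp [mul_add]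
  map_smul' r f := by ext i; induction i using Fin.lastCases <;> simp [Algebra.smul_def] <;> ring

end Encoders

section Codes

variable {F K : Type*} [Field F] [Field K] [Algebra F K]

theorem card_sub_le_hammingNorm_traceEncoder [DecidableEq K] {ι : Type*} [Fintype ι]
    {σ : K →ₐ[F] K} {α ω : ι → K} (hαinj : Function.Injective α)
    (hα : ∀ i, σ (α i) * α i = 1) (hω : ∀ i, σ (ω i) = ω i * α i) (hω0 : ∀ i, ω i ≠ 0)
    {m : ℕ} {h : K[X]} (hh : h.natDegree ≤ m) (h0 : h ≠ 0) :
    Fintype.card ι - (2 * m + 1) ≤ hammingNorm (traceEncoder σ α ω h) := by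
  refine (Nat.sub_le_sub_left (natDegree_traceLift_le (σ := (σ : K →+* K)) hh) _).trans
    (card_sub_natDegree_le_hammingNorm hαinj (traceLift_ne_zero hh h0) fun i hi => ?_)
  have hi' : ω i * (α i * h.eval (α i) + σ (h.eval (α i))) = 0 := by
    rw [← hi, traceEncoder, LinearMap.coe_mk, AddHom.coe_mk, hω]
    ring
  rw [eval_traceLift (σ := (σ : K →+* K)) hh (hα i)]
  simp [(mul_eq_zero.1 hi').resolve_left (hω0 i)]

theorem finrank_range_traceEncoder {ι : Type*} [Fintype ι]
    (hK : Module.finrank F K = 2) {σ : K →ₐ[F] K} {α ω : ι → K} (hαinj : Function.Injective α)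
    (hα : ∀ i, σ (α i) * α i = 1) (hω : ∀ i, σ (ω i) = ω i * α i) (hω0 : ∀ i, ω i ≠ 0)
    {m : ℕ} (hm : 2 * m + 1 < Fintype.card ι) :
    Module.finrank F (LinearMap.range
      (traceEncoder σ α ω ∘ₗ (degreeLT K (m + 1)).subtype.restrictScalars F)) = 2 * m + 2 := by
  classical
  have hinj : Function.Injective
      (traceEncoder σ α ω ∘ₗ (degreeLT K (m + 1)).subtype.restrictScalars F) := by
    rw [← LinearMap.ker_eq_bot, LinearMap.ker_eq_bot']
    rintro ⟨h, hmem⟩ hzero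
    by_contra h0
    have hdist := card_sub_le_hammingNorm_traceEncoder hαinj hα hω hω0
      (mem_degreeLT_succ_iff_natDegree_le.1 hmem)
      (fun h' => h0 (Subtype.ext h'))
    simp only [LinearMap.coe_comp, Function.comp_apply, LinearMap.coe_restrictScalars,
      Submodule.coe_subtype] at hzero
    rw [hzero, hammingNorm_zero] at hdist
    omega
  rw [LinearMap.finrank_range_of_inj hinj, ← Module.finrank_mul_finrank F K, hK,
    (degreeLTEquiv K (m + 1)).finrank_eq, Module.finrank_fin_fun]
  ring

theorem finrank_range_grsEncoder_le (q k : ℕ) (a : Fin q → F) (θ : Fin (q + 1) → F) :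
    Module.finrank F (LinearMap.range
      ((grsEncoder q k a θ : F[X] →ₗ[F] Fin (q + 1) → K) ∘ₗ
        (degreeLT F k).subtype.restrictScalars F)) ≤ k := by
  have : Module.Finite F (degreeLT F k) := Module.Finite.equiv (degreeLTEquiv F k).symm
  refine (LinearMap.finrank_range_le _).trans_eq ?_
  rw [(degreeLTEquiv F k).finrank_eq, Module.finrank_fin_fun]

theorem exists_grsEncoder_eq {q t : ℕ} {a : Fin q → F} (ha : Function.Injective a)
    {θ : Fin (q + 1) → F} (hθ : ∀ i, θ i ≠ 0) {w : Fin (q + 1) → K}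
    (hw : ∀ i, w i ∈ Set.range (algebraMap F K)) {p : K[X]} (hp : p.natDegree ≤ t) (htq : t < q)
    (heval : ∀ j, w j.castSucc = algebraMap F K (θ j.castSucc) * p.eval (algebraMap F K (a j)))
    (hcoeff : w (Fin.last q) = algebraMap F K (θ (Fin.last q)) * p.coeff t) :
    ∃ f : F[X], f.natDegree ≤ t ∧ grsEncoder q (t + 1) a θ f = w := by
  obtain ⟨f, hf⟩ := exists_map_eq_of_eval_mem_range ha (p := p)
    (by rw [Fintype.card_fin]; omega) fun j => by
      obtain ⟨c, hc⟩ := hw j.castSucc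
      refine ⟨c / θ j.castSucc, ?_⟩
      rw [map_div₀, hc, heval, mul_div_cancel_left₀ _ ((_root_.map_ne_zero _).2 (hθ _))]
  refine ⟨f, by rwa [← natDegree_map_eq_of_injective (algebraMap F K).injective, hf],
    funext fun i => ?_⟩
  induction i using Fin.lastCases with
  | last => simp [grsEncoder, hcoeff, ← hf]
  | cast j =>
    simp [grsEncoder, heval, ← hf, eval_map_algebraMap, aeval_algebraMap_apply_eq_algebraMap_eval]

end Codes

section Construction

open FiniteField

variable {F K : Type*} [Field F] [Fintype F] [Field K] [Fintype K] [Algebra F K]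

theorem exists_grsEncoder_eq_traceEncoder (hK : Fintype.card K = Fintype.card F ^ 2)
    {α ω : Fin (Fintype.card F + 1) → K} (hαinj : Function.Injective α)
    (hα : ∀ i, frobeniusAlgHom F K (α i) * α i = 1)
    (hω : ∀ i, frobeniusAlgHom F K (ω i) = ω i * α i) (hω0 : ∀ i, ω i ≠ 0)
    {m : ℕ} (hm : 2 * m + 1 < Fintype.card F) :
    ∃ (a : Fin (Fintype.card F) → F) (θ : Fin (Fintype.card F + 1) → F),
      Function.Bijective a ∧ (∀ i, θ i ≠ 0) ∧
      ∀ h : K[X], h.natDegree ≤ m → ∃ f : F[X], f.natDegree ≤ 2 * m + 1 ∧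
        grsEncoder (Fintype.card F) (2 * m + 2) a θ f =
          traceEncoder (frobeniusAlgHom F K) α ω h := by
  let σ : K →+* K := frobeniusAlgHom F K
  have hσ : ∀ y, σ (σ y) = y := frobeniusAlgHom_involutive hK
  have hfix : ∀ y, σ y = y → y ∈ Set.range (algebraMap F K) :=
    fun y => mem_range_algebraMap_of_pow_card_eq_self
  set δ := α (Fin.last _)
  set ν := ω (Fin.last _)
  have hδ : σ δ * δ = 1 := hα _
  have hδ0 : δ ≠ 0 := right_ne_zero_of_mul_eq_one hδ
  obtain ⟨B, hN⟩ := exists_sub_sq_mul_map_ne_zero (σ := σ) (exists_pow_card_ne_self hK) δ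
  have hαδ : ∀ j : Fin (Fintype.card F), α j.castSucc ≠ δ :=
    fun j h => (Fin.castSucc_lt_last j).ne (hαinj h)
  choose a ha using fun j => hfix _ (map_cayley hδ (hσ B) (hα _) (hαδ j))
  choose θ hθ using fun j : Fin (Fintype.card F) =>
    hfix _ (map_cayleyWeight (m := m) hδ (hσ B) hN (hω _) (hω0 _) (hα j.castSucc) (hω _))
  obtain ⟨θlast, hθlast⟩ := hfix ((δ * ν ^ 2) ^ m)⁻¹ (by
    rw [map_inv₀, map_pow, map_mul, map_pow, show σ ν = ν * δ from hω _,
      eq_inv_of_mul_eq_one_left hδ]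
    field_simp)
  have hainj : Function.Injective a := fun j j' hjj' => Fin.castSucc_injective _
    (hαinj (cayley_injOn hN (hαδ j) (hαδ j') (by rw [← ha, ← ha, hjj'])))
  have hθ0 : ∀ j, θ j ≠ 0 := fun j h0 => cayleyWeight_ne_zero hN (hω0 _)
    (right_ne_zero_of_mul_eq_one (hα _)) (hαδ j) (hω0 _) (by rw [← hθ j, h0, map_zero])
  have hθlast0 : θlast ≠ 0 := fun h0 => inv_ne_zero
    (pow_ne_zero _ (mul_ne_zero hδ0 (pow_ne_zero _ (hω0 _)))) (by rw [← hθlast, h0, map_zero])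
  have hsnoc0 : ∀ i, (Fin.snoc θ θlast : Fin (Fintype.card F + 1) → F) i ≠ 0 :=
    Fin.lastCases (by simpa using hθlast0) fun j => by simpa using hθ0 j
  refine ⟨a, Fin.snoc θ θlast, (Fintype.bijective_iff_injective_and_card a).2 ⟨hainj, by simp⟩,
    hsnoc0, fun h hh => exists_grsEncoder_eq hainj hsnoc0
      (fun i => hfix _ (map_trace_eq_self hσ _ _))
      (natDegree_cayleyTransform_le (σ := σ) (δ := δ) (B := B) (ν := ν) h) hm
      (fun j => ?_) ?_⟩
  · rw [Fin.snoc_castSucc, hθ, ha]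
    exact trace_eq_cayleyWeight_mul_eval hN (hω0 _) hh (hα _) (hαδ j) (hω _)
  · rw [Fin.snoc_last, hθlast]
    exact trace_eq_mul_coeff_cayleyTransform hδ (hω _) (hω0 _) hh

theorem exists_range_grsEncoder_eq_range_traceEncoder
    (hK : Fintype.card K = Fintype.card F ^ 2)
    {α ω : Fin (Fintype.card F + 1) → K} (hαinj : Function.Injective α)
    (hα : ∀ i, frobeniusAlgHom F K (α i) * α i = 1)
    (hω : ∀ i, frobeniusAlgHom F K (ω i) = ω i * α i) (hω0 : ∀ i, ω i ≠ 0)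
    {m : ℕ} (hm : 2 * m + 1 < Fintype.card F) :
    ∃ (a : Fin (Fintype.card F) → F) (θ : Fin (Fintype.card F + 1) → F),
      Function.Bijective a ∧ (∀ i, θ i ≠ 0) ∧
      LinearMap.range ((grsEncoder _ (2 * m + 2) a θ : F[X] →ₗ[F] _ → K) ∘ₗ
          (degreeLT F (2 * m + 1 + 1)).subtype.restrictScalars F) =
        LinearMap.range (traceEncoder (frobeniusAlgHom F K) α ω ∘ₗ
          (degreeLT K (m + 1)).subtype.restrictScalars F) := by
  obtain ⟨a, θ, ha, hθ, hgrs⟩ := exists_grsEncoder_eq_traceEncoder hK hαinj hα hω hω0 hm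
  refine ⟨a, θ, ha, hθ, (Submodule.eq_of_le_of_finrank_le ?_ ?_).symm⟩
  · rintro _ ⟨⟨h, hh⟩, rfl⟩
    obtain ⟨f, hf, hfh⟩ := hgrs h (mem_degreeLT_succ_iff_natDegree_le.1 hh)
    exact ⟨⟨f, mem_degreeLT_succ_iff_natDegree_le.2 hf⟩, hfh⟩
  · rw [finrank_range_traceEncoder (finrank_eq_two_of_card_eq_sq hK) hαinj hα hω hω0
      (by rw [Fintype.card_fin]; omega)]
    exact finrank_range_grsEncoder_le _ _ a θ

end Construction

/-- Let `q` be a prime power, `F = 𝔽_q ⊆ K = 𝔽_{q²}`, let `α 1, …, α (q+1)`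
be the `q+1` distinct `(q+1)`-st roots of unity in `K`, and for each `i` choose `ω i ∈ K` with
`α i = (ω i)^(q−1)`.  If `k` is even with `1 ≤ k ≤ q`, then the code
`C = {(ω₁^q h(α₁)+ω₁ h(α₁)^q, …, ω_{q+1}^q h(α_{q+1})+ω_{q+1} h(α_{q+1})^q) :
      h ∈ K[X], deg h ≤ k/2 − 1}`
is a `k`-dimensional `F`-linear subspace of `F^{q+1}` (embedded in `K^{q+1}`) with minimum
distance `q+2−k`, i.e. a `[q+1,k,q+2−k]_q` MDS code, and moreover `C` is a generalised
Reed–Solomon code over `F`. -/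
theorem grs_of_trace_evaluation_code_even
    (q k : ℕ) (F K : Type*) [Field F] [Fintype F] [Field K] [Fintype K]
    [DecidableEq K] [Algebra F K]
    (hF : Fintype.card F = q) (hK : Fintype.card K = q ^ 2)
    (hkeven : Even k) (hk1 : 1 ≤ k) (hkq : k ≤ q)
    (α : Fin (q + 1) → K) (hαinj : Function.Injective α)
    (hαroot : ∀ i, α i ^ (q + 1) = 1)
    (ω : Fin (q + 1) → K) (hω : ∀ i, α i = ω i ^ (q - 1))
    (Code : Set (Fin (q + 1) → K))
    (hCode : Code = { w | ∃ h : Polynomial K, h.degree ≤ (k / 2 - 1 : ℕ) ∧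
      w = fun i => ω i ^ q * h.eval (α i) + ω i * (h.eval (α i)) ^ q }) :
    (∃ V : Submodule F (Fin (q + 1) → K), (V : Set (Fin (q + 1) → K)) = Code ∧
       Module.finrank F V = k) ∧
    (∀ w ∈ Code, w ≠ 0 → q + 2 - k ≤ hammingNorm w) ∧
    IsGRSCode q k F K Code := by
  obtain ⟨m, rfl⟩ : ∃ m, k = 2 * m + 2 := ⟨k / 2 - 1, by obtain ⟨r, hr⟩ := hkeven; omega⟩
  rw [show (2 * m + 2) / 2 - 1 = m by omega] at hCode
  subst hF
  have hα : ∀ i, FiniteField.frobeniusAlgHom F K (α i) * α i = 1 :=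
    fun i => (pow_succ _ _).symm.trans (hαroot i)
  have hω0 : ∀ i, ω i ≠ 0 := fun i h0 => by
    simpa [hω i, h0, zero_pow (show Fintype.card F - 1 ≠ 0 by omega)] using hαroot i
  have hωα : ∀ i, FiniteField.frobeniusAlgHom F K (ω i) = ω i * α i := fun i => by
    rw [FiniteField.coe_frobeniusAlgHom, hω i, ← pow_succ', Nat.sub_add_cancel (by omega)]
  obtain ⟨a, θ, ha, hθ, hWV⟩ :=
    exists_range_grsEncoder_eq_range_traceEncoder hK hαinj hα hωα hω0 (m := m) (by omega)
  have hCodeV := hCode.trans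
    (coe_range_comp_degreeLT (traceEncoder (FiniteField.frobeniusAlgHom F K) α ω) m).symm
  refine ⟨⟨_, hCodeV.symm, finrank_range_traceEncoder (finrank_eq_two_of_card_eq_sq hK) hαinj hα
    hωα hω0 (by rw [Fintype.card_fin]; omega)⟩, ?_, a, θ, ha, hθ, ?_⟩
  · rw [hCodeV]
    rintro _ ⟨⟨h, hh⟩, rfl⟩ hw0
    have h0 : h ≠ 0 := by
      rintro rfl
      exact hw0 (map_zero _)
    refine le_trans (by rw [Fintype.card_fin]; omega) (card_sub_le_hammingNorm_traceEncoder
      hαinj hα hωα hω0 (mem_degreeLT_succ_iff_natDegree_le.1 hh) h0)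
  · rw [hCodeV, ← hWV, coe_range_comp_degreeLT]
    rfl
end

section
/- Let q be an odd prime power, let ω be a primitive element of F_{q²}, let α = ω^{q−1} (a primitive (q+1)-st root of unity), and let r be a positive integer with 2r ≤ q + 1. Then the polynomial g_3(X) = ∏_{i=−r+1}^{r} (X − ω α^i) ∈ F_{q²}[X] has all of its coefficients in the subfield F_q, and g_3(X) divides X^{q+1} − ω^{q+1} (note ω^{q+1} ∈ F_q and ω^{q+1} ≠ 1). -/
/-!
The element `α = ω^(q-1)` has order `q + 1`, and `ω^q = ω α`, so the `q`-power Frobenius sends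
the root `ω α^i` of `g₃` to `ω α^(1-i)`. Since `i ↦ 1 - i` maps `{-r+1, …, r}` onto itself,
Frobenius permutes the roots, fixes `g₃`, and the coefficients of `g₃` lie in its fixed field `F`.
Every root satisfies `(ω α^i)^(q+1) = ω^(q+1)` because `α^(q+1) = 1`, and the roots are pairwise
distinct because the exponents differ by less than `2r ≤ q + 1`; hence `g₃ ∣ X^(q+1) - ω^(q+1)`.
-/

open Polynomial

theorem orderOf_pow_of_orderOf_eq_mul {G : Type*} [Monoid G] {x : G} {m n : ℕ}
    (h : orderOf x = m * n) (hm : m ≠ 0) : orderOf (x ^ m) = n := by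
  rw [orderOf_pow_of_dvd hm (h ▸ dvd_mul_right m n), h,
    Nat.mul_div_cancel_left n (Nat.pos_of_ne_zero hm)]

theorem eq_of_zpow_eq_zpow_of_abs_sub_lt {G₀ : Type*} [GroupWithZero G₀] {a : G₀} {i j : ℤ}
    (hij : a ^ i = a ^ j) (h : |i - j| < orderOf a) : i = j := by
  have ha : IsOfFinOrder a := orderOf_pos_iff.1 (by exact_mod_cast (abs_nonneg _).trans_lt h)
  lift a to G₀ˣ using ha.isUnit
  rw [← Units.val_zpow_eq_zpow_val, ← Units.val_zpow_eq_zpow_val, Units.val_inj,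
    zpow_eq_zpow_iff_modEq] at hij
  rw [orderOf_units] at h
  exact (sub_eq_zero.1 (Int.eq_zero_of_abs_lt_dvd hij.dvd (abs_sub_comm i j ▸ h))).symm

theorem injOn_mul_zpow_Icc {G₀ : Type*} [GroupWithZero G₀] {ω α : G₀} (hω : ω ≠ 0) {a b : ℤ}
    (hab : b - a < orderOf α) : Set.InjOn (fun i : ℤ => ω * α ^ i) (Set.Icc a b) := by
  intro i hi j hj hij
  refine eq_of_zpow_eq_zpow_of_abs_sub_lt (mul_left_cancel₀ hω hij) ?_
  rw [abs_lt]
  constructor <;> linarith [hi.1, hi.2, hj.1, hj.2]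

theorem mul_zpow_pow_of_pow_eq_one {M : Type*} [DivisionCommMonoid M] (ω : M) {α : M} {n : ℕ}
    (hα : α ^ n = 1) (i : ℤ) : (ω * α ^ i) ^ n = ω ^ n := by
  rw [mul_pow, ← zpow_natCast (α ^ i), zpow_comm, zpow_natCast, hα, one_zpow, mul_one]

theorem mul_zpow_pow_of_pow_eq_mul {G₀ : Type*} [CommGroupWithZero G₀] {ω α : G₀} {q : ℕ}
    (hω : ω ^ q = ω * α) (hα : α ^ (q + 1) = 1) (i : ℤ) :
    (ω * α ^ i) ^ q = ω * α ^ (1 - i) := by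
  have hα0 : α ≠ 0 := ne_zero_pow q.succ_ne_zero (hα ▸ one_ne_zero)
  have hαq : α ^ q = α⁻¹ := eq_inv_of_mul_eq_one_left (by rw [← pow_succ, hα])
  rw [mul_pow, ← zpow_natCast (α ^ i), zpow_comm, zpow_natCast, hαq, hω, inv_zpow',
    zpow_sub₀ hα0, zpow_one, zpow_neg, div_eq_mul_inv]
  ac_rfl

theorem Polynomial.map_prod_X_sub_C_of_perm {R ι : Type*} [CommRing R] (φ : R →+* R)
    {f : ι → R} {s : Finset ι} (e : ι ≃ ι) (hs : ∀ i, i ∈ s ↔ e i ∈ s)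
    (hφ : ∀ i ∈ s, φ (f i) = f (e i)) :
    (∏ i ∈ s, (X - C (f i))).map φ = ∏ i ∈ s, (X - C (f i)) := by
  rw [Polynomial.map_prod]
  exact Finset.prod_equiv e hs fun i hi => by simp [hφ i hi]

theorem Polynomial.prod_X_sub_C_dvd_of_injOn {K ι : Type*} [Field K] {f : ι → K}
    {s : Finset ι} (hf : Set.InjOn f s) {p : K[X]} (hp : ∀ i ∈ s, p.IsRoot (f i)) :
    ∏ i ∈ s, (X - C (f i)) ∣ p :=
  Finset.prod_dvd_of_coprime
    (fun _ hi _ hj hij =>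
      isCoprime_X_sub_C_of_isUnit_sub (sub_ne_zero.2 (hf.ne hi hj hij)).isUnit)
    fun i hi => dvd_iff_isRoot.2 (hp i hi)

namespace FiniteField

variable {F K : Type*} [Field F] [Fintype F] [Field K] [Algebra F K]

/-- The roots of `X^|F| - X` in `K` are already the `|F|` elements of `F`. -/
theorem mem_range_algebraMap_of_pow_card_eq {x : K} (hx : x ^ Fintype.card F = x) :
    x ∈ Set.range (algebraMap F K) := by
  have hne : (X ^ Fintype.card F - X : F[X]) ≠ 0 :=
    X_pow_card_sub_X_ne_zero F Fintype.one_lt_card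
  have hroots := roots_map_of_injective_of_card_eq_natDegree (algebraMap F K).injective
    (p := X ^ Fintype.card F - X) (by
      rw [roots_X_pow_card_sub_X, X_pow_card_sub_X_natDegree_eq F Fintype.one_lt_card]; rfl)
  have hx' : x ∈ ((X ^ Fintype.card F - X : F[X]).map (algebraMap F K)).roots := by
    rw [mem_roots ((Polynomial.map_ne_zero_iff (algebraMap F K).injective).2 hne)]
    simp [hx]
  rw [← hroots, roots_X_pow_card_sub_X] at hx'
  obtain ⟨a, -, rfl⟩ := Multiset.mem_map.1 hx'
  exact ⟨a, rfl⟩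

theorem coeff_prod_X_sub_C_mem_range_of_perm {ι : Type*} {f : ι → K} {s : Finset ι} (e : ι ≃ ι)
    (hs : ∀ i, i ∈ s ↔ e i ∈ s) (hf : ∀ i ∈ s, f i ^ Fintype.card F = f (e i)) (j : ℕ) :
    (∏ i ∈ s, (X - C (f i))).coeff j ∈ Set.range (algebraMap F K) := by
  apply mem_range_algebraMap_of_pow_card_eq
  have := congrArg (coeff · j) <|
    map_prod_X_sub_C_of_perm (frobeniusAlgHom F K : K →+* K) e hs hf
  simpa using this

end FiniteField

theorem grassl_roetteler_g3_coeffs_and_dvd_general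
    (q r : ℕ) (F K : Type*) [Field F] [Fintype F] [Field K] [Algebra F K]
    (hF : Fintype.card F = q)
    (hqodd : Odd q) (hr : 2 * r ≤ q + 1)
    (ω : K) (hω : orderOf ω = q ^ 2 - 1)
    (α : K) (hα : α = ω ^ (q - 1))
    (g₃ : Polynomial K)
    (hg₃ : g₃ = ∏ i ∈ Finset.Icc (-(r : ℤ) + 1) (r : ℤ), (X - C (ω * α ^ i))) :
    (∀ j, g₃.coeff j ∈ Set.range (algebraMap F K)) ∧
    g₃ ∣ (X ^ (q + 1) - C (ω ^ (q + 1))) ∧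
    ω ^ (q + 1) ∈ Set.range (algebraMap F K) ∧ ω ^ (q + 1) ≠ 1 := by
  have hq : 3 ≤ q := by
    have := hF ▸ Fintype.one_lt_card (α := F)
    obtain ⟨m, rfl⟩ := hqodd
    omega
  have hω' : orderOf ω = (q - 1) * (q + 1) := by rw [hω, mul_comm, ← sq_tsub_sq, one_pow]
  have hαorder : orderOf α = q + 1 := hα ▸ orderOf_pow_of_orderOf_eq_mul hω' (by omega)
  have hα1 : α ^ (q + 1) = 1 := hαorder ▸ pow_orderOf_eq_one α
  have hω0 : ω ≠ 0 :=
    (orderOf_pos_iff (x := ω)).1 (hω' ▸ Nat.mul_pos (by omega) (by omega)) |>.isUnit.ne_zero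
  have hωq : ω ^ q = ω * α := by rw [hα, ← pow_succ', Nat.sub_add_cancel (by omega)]
  have hωsq : ω ^ q ^ 2 = ω := by
    rw [← Nat.sub_add_cancel (Nat.one_le_pow 2 q (by omega)), pow_succ, ← hω,
      pow_orderOf_eq_one, one_mul]
  subst hg₃
  refine ⟨FiniteField.coeff_prod_X_sub_C_mem_range_of_perm (Equiv.subLeft 1) ?_
    fun i _ => hF ▸ mul_zpow_pow_of_pow_eq_mul hωq hα1 i, ?_, ?_, ?_⟩
  · intro i
    simp only [Finset.mem_Icc, Equiv.subLeft_apply]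
    omega
  · refine prod_X_sub_C_dvd_of_injOn ?_ fun i _ => by simp [mul_zpow_pow_of_pow_eq_one ω hα1]
    rw [Finset.coe_Icc]
    exact injOn_mul_zpow_Icc hω0 (by rw [hαorder]; push_cast; omega)
  · refine FiniteField.mem_range_algebraMap_of_pow_card_eq ?_
    rw [hF, ← pow_mul, show (q + 1) * q = q ^ 2 + q by ring, pow_add, hωsq, pow_succ']
  · exact pow_ne_one_of_lt_orderOf (by omega) (by rw [hω']; exact lt_mul_left (by omega) (by omega))

/-- Let `q` be an odd prime power, `F = 𝔽_q ⊆ K = 𝔽_{q²}`, let `ω` be a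
primitive element of `K`, let `α = ω^{q−1}` (a primitive `(q+1)`-st root of unity), and let
`r` be a positive integer with `2r ≤ q + 1`.  Then the polynomial
`g₃(X) = ∏_{i=−r+1}^{r} (X − ω α^i) ∈ K[X]` has all of its coefficients in the subfield `F`,
and `g₃` divides `X^{q+1} − ω^{q+1}` (note `ω^{q+1} ∈ F` and `ω^{q+1} ≠ 1`). -/
theorem grassl_roetteler_g3_coeffs_and_dvd
    (q r : ℕ) (F K : Type*) [Field F] [Fintype F] [Field K] [Fintype K] [Algebra F K]
    (hF : Fintype.card F = q) (hK : Fintype.card K = q ^ 2)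
    (hqodd : Odd q) (hr1 : 1 ≤ r) (hr : 2 * r ≤ q + 1)
    (ω : K) (hω : orderOf ω = q ^ 2 - 1)
    (α : K) (hα : α = ω ^ (q - 1))
    (g₃ : Polynomial K)
    (hg₃ : g₃ = ∏ i ∈ Finset.Icc (-(r : ℤ) + 1) (r : ℤ), (X - C (ω * α ^ i))) :
    (∀ j, g₃.coeff j ∈ Set.range (algebraMap F K)) ∧
    g₃ ∣ (X ^ (q + 1) - C (ω ^ (q + 1))) ∧
    ω ^ (q + 1) ∈ Set.range (algebraMap F K) ∧ ω ^ (q + 1) ≠ 1 :=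
  grassl_roetteler_g3_coeffs_and_dvd_general q r F K hF hqodd hr ω hω α hα g₃ hg₃
end

section
/- Let q and k both be odd, q a prime power, 1 ≤ k ≤ q, and write k = q − 2r. Let ω be a primitive element of F_{q²}, α = ω^{q−1}, and let c_0, …, c_{2r+1} ∈ F_q be defined by ∏_{i=−r}^{r} (X − α^i) = Σ_{j=0}^{2r+1} c_j X^j. Fix β ∈ F_{q²} with β + β^q = 1, and for a ∈ {0, …, k−1} define h_a(X) = Σ_{i=1}^{(q−1)/2} Σ_{j=0}^{2r+1} c_j α^{i(j+a)} X^{(q+1)/2 − i} + Σ_{j=0}^{2r+1} c_j (−1)^{j+a} β + Σ_{j=0}^{2r+1} c_j β X^{(q+1)/2}. Then deg h_a ≤ (k−1)/2; in particular the coefficients of X^m in h_a vanish for all m with (k−1)/2 < m ≤ (q+1)/2. -/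
open Polynomial

/-! Writing `g = ∏_{i=-r}^{r} (X - α^i) = Σ c_j X^j`, the coefficient of `X^((q+1)/2 - i)` in
`h_a` is `Σ_j c_j α^{i(j+a)} = α^{ia} g(α^i)` and the top coefficient is `β g(1)`. Since
`q = k + 2r`, every exponent `(q+1)/2 - i` above `(k-1)/2` has `i ≤ r`, so `α^i` is a root of `g`. -/

namespace Polynomial

theorem eval_prod_X_sub_C_eq_zero {R ι : Type*} [CommRing R] {s : Finset ι} (f : ι → R)
    {i : ι} (hi : i ∈ s) : (∏ j ∈ s, (X - C (f j))).eval (f i) = 0 := by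
  rw [eval_prod]
  exact Finset.prod_eq_zero hi (by simp)

section CommSemiring

variable {R : Type*} [CommSemiring R] {p : R[X]} {n : ℕ}

theorem sum_range_coeff_mul_pow_mul (hn : p.natDegree < n) (x : R) (i a : ℕ) :
    ∑ j ∈ Finset.range n, p.coeff j * x ^ (i * (j + a)) = p.eval (x ^ i) * x ^ (i * a) := by
  rw [eval_eq_sum_range' hn, Finset.sum_mul]
  refine Finset.sum_congr rfl fun j _ => ?_
  rw [Nat.mul_add, pow_add, pow_mul, mul_assoc]

theorem sum_range_coeff_mul (hn : p.natDegree < n) (b : R) :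
    ∑ j ∈ Finset.range n, p.coeff j * b = p.eval 1 * b := by
  simp [eval_eq_sum_range' hn, Finset.sum_mul]

theorem sum_range_C_coeff_mul_pow_mul_mul_X_pow (hn : p.natDegree < n) (x : R) (i a e : ℕ) :
    ∑ j ∈ Finset.range n, C (p.coeff j * x ^ (i * (j + a))) * X ^ e
      = C (p.eval (x ^ i) * x ^ (i * a)) * X ^ e := by
  rw [← Finset.sum_mul, ← map_sum, sum_range_coeff_mul_pow_mul hn]

end CommSemiring

theorem coeff_sum_C_mul_X_pow_tsub_eq_zero {R : Type*} [Semiring R] (s : Finset ℕ)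
    (u : ℕ → R) {N m : ℕ} (hu : ∀ i ∈ s, N - i = m → u i = 0) :
    (∑ i ∈ s, C (u i) * X ^ (N - i)).coeff m = 0 := by
  rw [finsetSum_coeff]
  refine Finset.sum_eq_zero fun i hi => ?_
  rw [coeff_C_mul_X_pow]
  split_ifs with h
  exacts [hu i hi h.symm, rfl]

end Polynomial

theorem ha_degree_bound_odd_odd_general
    (q k r : ℕ) (F K : Type*) [Field F] [Field K] [Algebra F K]
    (hkr : (k : ℤ) = q - 2 * r)
    (α : K)
    (c : ℕ → F)
    (hc : ∀ j, algebraMap F K (c j) =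
      (∏ i ∈ Finset.Icc (-(r : ℤ)) (r : ℤ), (X - C (α ^ i))).coeff j)
    (β : K)
    (a : ℕ)
    (h : Polynomial K)
    (hh : h = ∑ i ∈ Finset.Icc 1 ((q - 1) / 2), ∑ j ∈ Finset.range (2 * r + 2),
        C (algebraMap F K (c j) * α ^ (i * (j + a))) * X ^ ((q + 1) / 2 - i)
      + C (∑ j ∈ Finset.range (2 * r + 2),
          algebraMap F K (c j) * (-1 : K) ^ (j + a) * β)
      + C (∑ j ∈ Finset.range (2 * r + 2), algebraMap F K (c j) * β) * X ^ ((q + 1) / 2)) :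
    h.degree ≤ ((k - 1) / 2 : ℕ) ∧
    ∀ m : ℕ, (k - 1) / 2 < m → m ≤ (q + 1) / 2 → h.coeff m = 0 := by
  set g : K[X] := ∏ i ∈ Finset.Icc (-(r : ℤ)) r, (X - C (α ^ i))
  have hdeg : g.natDegree < 2 * r + 2 := by
    rw [natDegree_finsetProd_X_sub_C_eq_card, Int.card_Icc]; omega
  have hroot : ∀ i ≤ r, g.eval (α ^ i) = 0 := fun i hi => by
    simpa using eval_prod_X_sub_C_eq_zero (fun j : ℤ => α ^ j) (i := (i : ℤ))
      (Finset.mem_Icc.2 ⟨by omega, by omega⟩)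
  have hroot_one : g.eval 1 = 0 := by simpa using hroot 0 r.zero_le
  simp only [hc, sum_range_C_coeff_mul_pow_mul_mul_X_pow hdeg, sum_range_coeff_mul hdeg,
    hroot_one] at hh
  have hcoeff : ∀ m, (k - 1) / 2 < m → h.coeff m = 0 := fun m hm => by
    rw [hh, coeff_add, coeff_add, coeff_C, if_neg (by omega), zero_mul, C_0, zero_mul,
      coeff_zero, add_zero, add_zero]
    exact coeff_sum_C_mul_X_pow_tsub_eq_zero _ _ fun i _ him => by
      rw [hroot i (by omega), zero_mul]
  exact ⟨degree_le_iff_coeff_zero _ _ |>.2 fun m hm => hcoeff m (by exact_mod_cast hm),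
    fun m hm _ => hcoeff m hm⟩

/-- Let `q` and `k` both be odd, `q` a prime power, `1 ≤ k ≤ q`, and write
`k = q − 2r`.  Let `ω` be a primitive element of `K = 𝔽_{q²}`, `α = ω^{q−1}`, and let
`c₀, …, c_{2r+1} ∈ F = 𝔽_q` be defined by `∏_{i=−r}^{r} (X − α^i) = Σ_{j=0}^{2r+1} c_j X^j`.
Fix `β ∈ K` with `β + β^q = 1`, and for `a ∈ {0, …, k−1}` define
`h_a(X) = Σ_{i=1}^{(q−1)/2} Σ_{j=0}^{2r+1} c_j α^{i(j+a)} X^{(q+1)/2 − i}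
          + Σ_{j=0}^{2r+1} c_j (−1)^{j+a} β + Σ_{j=0}^{2r+1} c_j β X^{(q+1)/2}`.
Then `deg h_a ≤ (k−1)/2`; in particular the coefficients of `X^m` in `h_a` vanish for all
`m` with `(k−1)/2 < m ≤ (q+1)/2`. -/
theorem ha_degree_bound_odd_odd
    (q k r : ℕ) (F K : Type*) [Field F] [Fintype F] [Field K] [Fintype K] [Algebra F K]
    (hF : Fintype.card F = q) (hK : Fintype.card K = q ^ 2)
    (hqodd : Odd q) (hkodd : Odd k) (hk1 : 1 ≤ k) (hkq : k ≤ q)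
    (hkr : (k : ℤ) = q - 2 * r)
    (ω : K) (hω : orderOf ω = q ^ 2 - 1)
    (α : K) (hα : α = ω ^ (q - 1))
    (c : ℕ → F)
    (hc : ∀ j, algebraMap F K (c j) =
      (∏ i ∈ Finset.Icc (-(r : ℤ)) (r : ℤ), (X - C (α ^ i))).coeff j)
    (β : K) (hβ : β + β ^ q = 1)
    (a : ℕ) (ha : a < k)
    (h : Polynomial K)
    (hh : h = ∑ i ∈ Finset.Icc 1 ((q - 1) / 2), ∑ j ∈ Finset.range (2 * r + 2),
        C (algebraMap F K (c j) * α ^ (i * (j + a))) * X ^ ((q + 1) / 2 - i)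
      + C (∑ j ∈ Finset.range (2 * r + 2),
          algebraMap F K (c j) * (-1 : K) ^ (j + a) * β)
      + C (∑ j ∈ Finset.range (2 * r + 2), algebraMap F K (c j) * β) * X ^ ((q + 1) / 2)) :
    h.degree ≤ ((k - 1) / 2 : ℕ) ∧
    ∀ m : ℕ, (k - 1) / 2 < m → m ≤ (q + 1) / 2 → h.coeff m = 0 :=
  ha_degree_bound_odd_odd_general q k r F K hkr α c hc β a h hh
end

section
/- Let q and k both be odd, q a prime power, 1 ≤ k ≤ q, and write k = q − 2r. Let ω be a primitive element of F_{q²}, α = ω^{q−1}, and let c_0, …, c_{2r+1} ∈ F_q be defined by ∏_{i=−r}^{r} (X − α^i) = Σ_{j=0}^{2r+1} c_j X^j; set c_j = 0 for j < 0 or j > 2r+1. Fix β ∈ F_{q²} with β + β^q = 1, and for a ∈ {0, …, k−1} define h_a(X) = Σ_{i=1}^{(q−1)/2} Σ_{j=0}^{2r+1} c_j α^{i(j+a)} X^{(q+1)/2 − i} + Σ_{j=0}^{2r+1} c_j (−1)^{j+a} β + Σ_{j=0}^{2r+1} c_j β X^{(q+1)/2}. Then for every s ∈ {0, 1, …, q},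 h_a(α^s) + h_a(α^s)^q = (−1)^s c_{s−a}. -/
/-!
Write `q = 2M + 1`. Then `α^(M+1) = -1`, and every monomial of `h_a(α^s)` becomes `(-1)^s c_j u_j^i`
with `u_j = α^(j+a-s)`, so `h_a(α^s) = (-1)^s Σ_j c_j (Σ_{i=1}^M u_j^i + β u_j^(M+1) + β)`.
The Frobenius `x ↦ x^q` fixes the `c_j` and `±1`, inverts the `(q+1)`-st roots of unity `u_j` and
sends `β` to `1 - β`; adding it completes each bracket to the full geometric sum
`Σ_{i=0}^{q} u_j^i`, which is `q + 1 = 1` when `u_j = 1` and `0` otherwise.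
As `|j + a - s| ≤ q`, only the index `j = s - a` survives.
-/

open Polynomial Finset

theorem IsPrimitiveRoot.pow_sub_one_of_sq_sub_one {G : Type*} [CommMonoid G] {ω : G} {q : ℕ}
    (hω : IsPrimitiveRoot ω (q ^ 2 - 1)) (hq : 2 ≤ q) : IsPrimitiveRoot (ω ^ (q - 1)) (q + 1) := by
  have hfac : q ^ 2 - 1 = (q - 1) * (q + 1) := by simpa [mul_comm] using Nat.sq_sub_sq q 1
  simpa [hfac, Nat.mul_div_cancel_left _ (by omega : 0 < q - 1)] using
    hω.pow_of_dvd (by omega : q - 1 ≠ 0) (hfac ▸ dvd_mul_right _ _)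

section RootsOfUnity

variable {K : Type*} [Field K] {α : K} {n : ℕ}

theorem IsPrimitiveRoot.pow_eq_neg_one_of_two_mul (hα : IsPrimitiveRoot α (2 * n))
    (hn : n ≠ 0) : α ^ n = -1 := by
  have := hα.pow_of_dvd hn (dvd_mul_left n 2)
  rw [Nat.mul_div_cancel _ (Nat.pos_of_ne_zero hn)] at this
  exact this.eq_neg_one_of_two_right

theorem IsPrimitiveRoot.zpow_pow_eq_one (hα : IsPrimitiveRoot α n) (t : ℤ) :
    (α ^ t) ^ n = 1 := by
  rw [← zpow_natCast, ← zpow_mul, mul_comm, zpow_mul, hα.zpow_eq_one, one_zpow]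

theorem IsPrimitiveRoot.zpow_pow_pred_eq_inv (hα : IsPrimitiveRoot α (n + 1)) (t : ℤ) :
    (α ^ t) ^ n = (α ^ t)⁻¹ :=
  eq_inv_of_mul_eq_one_left (by rw [← pow_succ, hα.zpow_pow_eq_one])

theorem IsPrimitiveRoot.geom_sum_zpow (hα : IsPrimitiveRoot α n) (t : ℤ) :
    ∑ i ∈ range n, (α ^ t) ^ i = if (n : ℤ) ∣ t then (n : K) else 0 := by
  split_ifs with h
  · simp [(hα.zpow_eq_one_iff_dvd t).2 h]
  · rw [geom_sum_eq (mt (hα.zpow_eq_one_iff_dvd t).1 h), hα.zpow_pow_eq_one, sub_self,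
      zero_div]

theorem pow_mul_pow_sub_eq (hα : α ≠ 0) {i : ℕ} (hi : i ≤ n) (m s : ℕ) :
    α ^ (i * m) * (α ^ s) ^ (n - i) = (α ^ n) ^ s * (α ^ ((m : ℤ) - s)) ^ i := by
  simp only [← zpow_natCast, ← zpow_mul, ← zpow_add₀ hα]
  congr 1
  push_cast [hi]
  ring

theorem geom_sum_two_mul_succ_of_pow_eq_one {u : K} {M : ℕ} (hu : u ^ (2 * (M + 1)) = 1) :
    ∑ i ∈ range (2 * (M + 1)), u ^ i = 1 + ∑ i ∈ Icc 1 M, (u ^ i + u⁻¹ ^ i) + u ^ (M + 1) := by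
  have hinv : ∀ i ≤ 2 * (M + 1), u⁻¹ ^ i = u ^ (2 * (M + 1) - i) := fun i hi => by
    rw [inv_pow, inv_eq_of_mul_eq_one_left (a := u ^ (2 * (M + 1) - i)) (by
      rw [← pow_add, Nat.sub_add_cancel hi, hu])]
  have hreflect : ∑ i ∈ Icc 1 M, u⁻¹ ^ i = ∑ i ∈ Ico (M + 2) (2 * (M + 1)), u ^ i := by
    refine sum_nbij' (fun i => 2 * (M + 1) - i) (fun i => 2 * (M + 1) - i) ?_ ?_ ?_ ?_ ?_ <;>
      intro i hi <;> simp only [mem_Icc, mem_Ico] at * <;>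
      first | omega | exact hinv i (by omega)
  have hshift : ∑ i ∈ Icc 1 M, u ^ i = ∑ i ∈ range M, u ^ (i + 1) := by
    rw [← Ico_add_one_right_eq_Icc, sum_Ico_eq_sum_range, Nat.add_sub_cancel]
    simp only [add_comm 1]
  rw [sum_add_distrib, hreflect, hshift,
    ← sum_range_add_sum_Ico _ (by omega : M + 2 ≤ 2 * (M + 1)), sum_range_succ, sum_range_succ',
    pow_zero]
  ring

def halfGeomSum (M : ℕ) (β u : K) : K := ∑ i ∈ Icc 1 M, u ^ i + β * u ^ (M + 1) + β

theorem halfGeomSum_add_map {M : ℕ} {R : Type*} [FunLike R K K] [RingHomClass R K K] (φ : R)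
    {β u : K} (hu : u ^ (2 * (M + 1)) = 1) (hφu : φ u = u⁻¹) (hφβ : φ β = 1 - β) :
    halfGeomSum M β u + φ (halfGeomSum M β u) = ∑ i ∈ range (2 * (M + 1)), u ^ i := by
  have hmid : u⁻¹ ^ (M + 1) = u ^ (M + 1) := by
    have hsq : u ^ (M + 1) * u ^ (M + 1) = 1 := by rw [← pow_add, ← hu]; ring_nf
    rw [inv_pow, ← eq_inv_of_mul_eq_one_left hsq]
  simp only [halfGeomSum, map_add, map_mul, map_sum, map_pow, hφu, hφβ, hmid]
  rw [geom_sum_two_mul_succ_of_pow_eq_one hu, sum_add_distrib]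
  ring

theorem eval_pow_eq_neg_one_pow_mul_sum_halfGeomSum {M : ℕ} (hα : α ≠ 0)
    (hαM : α ^ (M + 1) = -1) (d : ℕ → K) (β : K) (N a s : ℕ) :
    (∑ i ∈ Icc 1 M, ∑ j ∈ range N, C (d j * α ^ (i * (j + a))) * X ^ (M + 1 - i)
        + C (∑ j ∈ range N, d j * (-1) ^ (j + a) * β)
        + C (∑ j ∈ range N, d j * β) * X ^ (M + 1)).eval (α ^ s)
      = (-1) ^ s * ∑ j ∈ range N, d j * halfGeomSum M β (α ^ (((j + a : ℕ) : ℤ) - s)) := by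
  have hterm : ∀ j, ∀ i ≤ M + 1, α ^ (i * (j + a)) * (α ^ s) ^ (M + 1 - i)
      = (-1) ^ s * (α ^ (((j + a : ℕ) : ℤ) - s)) ^ i := fun j i hi => by
    rw [pow_mul_pow_sub_eq hα hi, hαM]
  have hsign : ∀ j, (-1 : K) ^ (j + a) = (-1) ^ s * (α ^ (((j + a : ℕ) : ℤ) - s)) ^ (M + 1) :=
    fun j => by rw [← hterm j (M + 1) le_rfl, Nat.sub_self, pow_zero, mul_one, pow_mul, hαM]
  have hlead : (α ^ s) ^ (M + 1) = (-1) ^ s := by rw [pow_right_comm, hαM]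
  simp only [eval_add, eval_finsetSum, eval_mul, eval_C, eval_pow, eval_X, hlead, sum_mul]
  rw [sum_comm, mul_sum, ← sum_add_distrib, ← sum_add_distrib]
  refine sum_congr rfl fun j _ => ?_
  rw [sum_congr rfl fun i hi => by
    rw [mul_assoc, hterm j i (by simp only [mem_Icc] at hi; omega), mul_left_comm], hsign]
  simp only [← mul_sum, halfGeomSum]
  ring

end RootsOfUnity

theorem Polynomial.sum_range_ite_intCast_eq {R : Type*} [Semiring R] {P : R[X]} {N : ℕ}
    (hP : P.natDegree < N) (t : ℤ) :
    ∑ j ∈ range N, (if (j : ℤ) = t then P.coeff j else 0)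
      = if 0 ≤ t then P.coeff t.toNat else 0 := by
  split_ifs with ht
  · lift t to ℕ using ht
    simp only [Nat.cast_inj, sum_ite_eq', mem_range, Int.toNat_natCast, ite_eq_left_iff, not_lt]
    exact fun h => (coeff_eq_zero_of_natDegree_lt (by omega)).symm
  · exact sum_eq_zero fun j _ => if_neg (by omega)

theorem Polynomial.sum_range_coeff_mul_ite_dvd {R : Type*} [Semiring R] {P : R[X]} {N m b s : ℕ}
    (hP : P.natDegree < N) (hb : N + b ≤ m) (hs : s < m) :
    ∑ j ∈ range N, P.coeff j * (if (m : ℤ) ∣ ((j + b : ℕ) : ℤ) - s then 1 else 0)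
      = if 0 ≤ (s : ℤ) - b then P.coeff ((s : ℤ) - b).toNat else 0 := by
  rw [← sum_range_ite_intCast_eq hP]
  refine sum_congr rfl fun j hj => ?_
  have hdvd : (m : ℤ) ∣ ((j + b : ℕ) : ℤ) - s ↔ (j : ℤ) = s - b := by
    simp only [mem_range] at hj
    refine ⟨fun hd => ?_, fun hj => by rw [show ((j + b : ℕ) : ℤ) - s = 0 by omega]; simp⟩
    have := Int.eq_zero_of_abs_lt_dvd hd (abs_lt.2 ⟨by omega, by omega⟩)
    omega
  simp only [hdvd, mul_ite, mul_one, mul_zero]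

theorem ha_evaluation_odd_odd_general
    (q k r : ℕ) (F K : Type*) [Field F] [Fintype F] [Field K] [Algebra F K]
    (hF : Fintype.card F = q)
    (hqodd : Odd q)
    (hkr : (k : ℤ) = q - 2 * r)
    (ω : K) (hω : orderOf ω = q ^ 2 - 1)
    (α : K) (hα : α = ω ^ (q - 1))
    (c : ℤ → F)
    (hc : ∀ j : ℤ, algebraMap F K (c j) =
      if 0 ≤ j then (∏ i ∈ Finset.Icc (-(r : ℤ)) (r : ℤ), (X - C (α ^ i))).coeff j.toNat
      else 0)
    (β : K) (hβ : β + β ^ q = 1)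
    (a : ℕ) (ha : a < k)
    (h : Polynomial K)
    (hh : h = ∑ i ∈ Finset.Icc 1 ((q - 1) / 2), ∑ j ∈ Finset.range (2 * r + 2),
        C (algebraMap F K (c j) * α ^ (i * (j + a))) * X ^ ((q + 1) / 2 - i)
      + C (∑ j ∈ Finset.range (2 * r + 2),
          algebraMap F K (c j) * (-1 : K) ^ (j + a) * β)
      + C (∑ j ∈ Finset.range (2 * r + 2), algebraMap F K (c j) * β) * X ^ ((q + 1) / 2)) :
    ∀ s : ℕ, s ≤ q →
      h.eval (α ^ s) + (h.eval (α ^ s)) ^ q =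
        (-1 : K) ^ s * algebraMap F K (c ((s : ℤ) - (a : ℤ))) := by
  intro s hs
  obtain ⟨M, rfl⟩ := hqodd
  have hprimq : IsPrimitiveRoot α (2 * M + 1 + 1) := by
    simpa [hα] using (hω ▸ IsPrimitiveRoot.orderOf ω).pow_sub_one_of_sq_sub_one
      (hF ▸ Fintype.one_lt_card)
  have hprim : IsPrimitiveRoot α (2 * (M + 1)) := by simpa [mul_add] using hprimq
  set φ := FiniteField.frobeniusAlgHom F K
  have hφ (y : K) : φ y = y ^ (2 * M + 1) := by rw [FiniteField.frobeniusAlgHom_apply, hF]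
  have hφu (t : ℤ) : φ (α ^ t) = (α ^ t)⁻¹ := by rw [hφ, hprimq.zpow_pow_pred_eq_inv]
  have hφβ : φ β = 1 - β := hφ β ▸ eq_sub_of_add_eq' hβ
  have hcard : ((2 * (M + 1) : ℕ) : K) = 1 := by
    rw [show 2 * (M + 1) = 2 * M + 1 + 1 by ring, Nat.cast_succ, ← hF,
      ← map_natCast (algebraMap F K), FiniteField.cast_card_eq_zero, map_zero, zero_add]
  set P := ∏ i ∈ Finset.Icc (-(r : ℤ)) (r : ℤ), (X - C (α ^ i))
  have hP : P.natDegree < 2 * r + 2 := by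
    simp only [P, natDegree_finsetProd_X_sub_C_eq_card, Int.card_Icc]; omega
  rw [show (2 * M + 1 + 1) / 2 = M + 1 by omega, show (2 * M + 1 - 1) / 2 = M by omega] at hh
  rw [← hφ, hh, eval_pow_eq_neg_one_pow_mul_sum_halfGeomSum (hprim.ne_zero (by omega))
    (hprim.pow_eq_neg_one_of_two_mul M.succ_ne_zero)]
  simp only [map_mul, map_sum, map_pow, map_neg, map_one, AlgHom.commutes, ← mul_add,
    ← sum_add_distrib, halfGeomSum_add_map φ (hprim.zpow_pow_eq_one _) (hφu _) hφβ,
    hprim.geom_sum_zpow, hcard]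
  simp only [hc, Nat.cast_nonneg, if_true, Int.toNat_natCast]
  rw [P.sum_range_coeff_mul_ite_dvd hP (by omega) (by omega)]

/-- Let `q` and `k` both be odd, `q` a prime power, `1 ≤ k ≤ q`, and write
`k = q − 2r`.  Let `ω` be a primitive element of `K = 𝔽_{q²}`, `α = ω^{q−1}`, and let
`c₀, …, c_{2r+1} ∈ F = 𝔽_q` be defined by `∏_{i=−r}^{r} (X − α^i) = Σ_{j=0}^{2r+1} c_j X^j`;
set `c_j = 0` for `j < 0` or `j > 2r+1`.  Fix `β ∈ K` with `β + β^q = 1`, and for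
`a ∈ {0, …, k−1}` define
`h_a(X) = Σ_{i=1}^{(q−1)/2} Σ_{j=0}^{2r+1} c_j α^{i(j+a)} X^{(q+1)/2 − i}
          + Σ_{j=0}^{2r+1} c_j (−1)^{j+a} β + Σ_{j=0}^{2r+1} c_j β X^{(q+1)/2}`.
Then for every `s ∈ {0, 1, …, q}`, `h_a(α^s) + h_a(α^s)^q = (−1)^s c_{s−a}`. -/
theorem ha_evaluation_odd_odd
    (q k r : ℕ) (F K : Type*) [Field F] [Fintype F] [Field K] [Fintype K] [Algebra F K]
    (hF : Fintype.card F = q) (hK : Fintype.card K = q ^ 2)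
    (hqodd : Odd q) (hkodd : Odd k) (hk1 : 1 ≤ k) (hkq : k ≤ q)
    (hkr : (k : ℤ) = q - 2 * r)
    (ω : K) (hω : orderOf ω = q ^ 2 - 1)
    (α : K) (hα : α = ω ^ (q - 1))
    (c : ℤ → F)
    (hc : ∀ j : ℤ, algebraMap F K (c j) =
      if 0 ≤ j then (∏ i ∈ Finset.Icc (-(r : ℤ)) (r : ℤ), (X - C (α ^ i))).coeff j.toNat
      else 0)
    (β : K) (hβ : β + β ^ q = 1)
    (a : ℕ) (ha : a < k)
    (h : Polynomial K)
    (hh : h = ∑ i ∈ Finset.Icc 1 ((q - 1) / 2), ∑ j ∈ Finset.range (2 * r + 2),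
        C (algebraMap F K (c j) * α ^ (i * (j + a))) * X ^ ((q + 1) / 2 - i)
      + C (∑ j ∈ Finset.range (2 * r + 2),
          algebraMap F K (c j) * (-1 : K) ^ (j + a) * β)
      + C (∑ j ∈ Finset.range (2 * r + 2), algebraMap F K (c j) * β) * X ^ ((q + 1) / 2)) :
    ∀ s : ℕ, s ≤ q →
      h.eval (α ^ s) + (h.eval (α ^ s)) ^ q =
        (-1 : K) ^ s * algebraMap F K (c ((s : ℤ) - (a : ℤ))) :=
  ha_evaluation_odd_odd_general q k r F K hF hqodd hkr ω hω α hα c hc β hβ a ha h hh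
end
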